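/- arXiv:1901.09349 — 6 statements merged into one kernel-verified Lean document; each statement's English description precedes it below -/
import Mathlib

section
/- For every graph G of size s ≥ 2, there exists a graph H_G of size at most 20·s / log₂ s such that G does not contain H_G as a minor. -/
/-- Number of ordered pairs `(a,b)` with `a ∈ A`, `b ∈ B`, `a` adjacent to `b` in `G`.
For a partition `(A, Aᶜ)` this is exactly the number of edges crossing the cut. -/
noncomputable def cutCard {V : Type*} (G : SimpleGraph V) (A B : Set V) : ℕ :=
  Nat.card {p : V × V // p.1 ∈ A ∧ p.2 ∈ B ∧ G.Adj p.1 p.2}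

/-- `G` is an `α`-expander: every cut `(A, Aᶜ)` into two non-empty parts has at least
`α · min(|A|,|Aᶜ|)` crossing edges. -/
def IsExpander {V : Type*} (G : SimpleGraph V) (α : ℝ) : Prop :=
  ∀ A : Set V, A.Nonempty → Aᶜ.Nonempty →
    α * (min (Nat.card ↥A) (Nat.card ↥(Aᶜ)) : ℝ) ≤ (cutCard G A Aᶜ : ℝ)

/-- Maximum vertex degree of `G` is at most `d`. -/
def DegLE {V : Type*} (G : SimpleGraph V) (d : ℕ) : Prop :=
  ∀ v : V, Nat.card ↥{w : V | G.Adj v w} ≤ d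

/-- `H` is a minor of `G`: there are pairwise-disjoint branch sets, each inducing a
connected subgraph of `G`, with an edge of `G` between the branch sets of every
pair of adjacent vertices of `H`. -/
def IsMinor {W V : Type*} (H : SimpleGraph W) (G : SimpleGraph V) : Prop :=
  ∃ φ : W → Set V,
    (∀ u, (G.induce (φ u)).Connected) ∧
    (∀ u v, u ≠ v → Disjoint (φ u) (φ v)) ∧
    (∀ u v, H.Adj u v → ∃ a ∈ φ u, ∃ b ∈ φ v, G.Adj a b)

/-- The size of a graph: number of vertices plus number of edges. -/
noncomputable def gsize {V : Type*} (G : SimpleGraph V) : ℕ := Nat.card V + Nat.card G.edgeSet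

/-! ### Auxiliary lemmas -/

lemma aux_not_minor_of_card_lt {V : Type} [Fintype V] (G : SimpleGraph V) {m : ℕ}
    (hm : Nat.card V < m) (H : SimpleGraph (Fin m)) : ¬ IsMinor H G := by
  rintro ⟨φ, hconn, hdisj, -⟩
  have hne : ∀ u, (φ u).Nonempty := by
    intro u
    obtain ⟨x⟩ := (hconn u).nonempty
    exact ⟨x.1, x.2⟩
  choose f hf using hne
  have hinj : Function.Injective f := by
    intro u v huv
    by_contra hne'
    exact Set.disjoint_left.1 (hdisj u v hne') (hf u) (huv ▸ hf v)
  have := Nat.card_le_card_of_injective f hinj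
  simp only [Nat.card_eq_fintype_card, Fintype.card_fin] at this hm
  omega

lemma gsize_bot (m : ℕ) : gsize (⊥ : SimpleGraph (Fin m)) = m := by
  simp [gsize, SimpleGraph.edgeSet_bot, Nat.card_eq_fintype_card]

lemma realA {s n : ℕ} (h2 : 2 ≤ s) (hns : n ≤ s) (hsmall : s ≤ 2 ^ 19) :
    ((n + 1 : ℕ) : ℝ) ≤ 20 * (s : ℝ) / Real.logb 2 s := by
  have hs2 : (2 : ℝ) ≤ (s : ℝ) := by exact_mod_cast h2
  have hL1 : 1 ≤ Real.logb 2 s := by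
    rw [← Real.logb_self_eq_one (b := 2) one_lt_two]
    exact Real.logb_le_logb_of_le one_lt_two two_pos hs2
  have hLpos : 0 < Real.logb 2 s := lt_of_lt_of_le one_pos hL1
  rw [le_div_iff₀ hLpos]
  push_cast
  rcases le_or_gt s 32 with hc | hc
  · have hL5 : Real.logb 2 s ≤ 5 := by
      have : Real.logb 2 s ≤ Real.logb 2 ((2:ℝ) ^ (5:ℕ)) := by
        apply Real.logb_le_logb_of_le one_lt_two (by linarith)
        norm_num
        exact_mod_cast hc
      simpa [Real.logb_pow, Real.logb_self_eq_one one_lt_two] using this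
    have hn : (n : ℝ) ≤ s := by exact_mod_cast hns
    nlinarith
  · have hL19 : Real.logb 2 s ≤ 19 := by
      have : Real.logb 2 s ≤ Real.logb 2 ((2:ℝ) ^ (19:ℕ)) := by
        apply Real.logb_le_logb_of_le one_lt_two (by linarith)
        norm_num
        exact_mod_cast hsmall
      simpa [Real.logb_pow, Real.logb_self_eq_one one_lt_two] using this
    have hn : (n : ℝ) ≤ s := by exact_mod_cast hns
    have : (32 : ℝ) < s := by exact_mod_cast hc
    nlinarith

/-! ### Encoding minors -/

/-- auxiliary "contract graph" -/
def GCgraph {V : Type} (G : SimpleGraph V) (C : Set G.edgeSet) : SimpleGraph V where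
  Adj x y := ∃ h : G.Adj x y, (⟨s(x, y), h⟩ : G.edgeSet) ∈ C
  symm := by
    constructor
    rintro x y ⟨h, hc⟩
    refine ⟨h.symm, ?_⟩
    have he : (⟨s(y, x), G.mem_edgeSet.2 h.symm⟩ : G.edgeSet) = ⟨s(x, y), h⟩ :=
      Subtype.ext (Sym2.eq_swap)
    rw [he]; exact hc
  loopless := ⟨fun x => by rintro ⟨h, -⟩; exact G.ne_of_adj h rfl⟩

/-- decoder -/
def decG {V : Type} (G : SimpleGraph V) (m : ℕ)
    (T : Set G.edgeSet × Set G.edgeSet × (Fin m → V)) : SimpleGraph (Fin m) where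
  Adj u v := u ≠ v ∧ ∃ x ∈ T.2.1, ∃ y z : V, (x : Sym2 V) = s(y, z) ∧
      (GCgraph G T.1).Reachable (T.2.2 u) y ∧ (GCgraph G T.1).Reachable (T.2.2 v) z
  symm := by
    constructor
    rintro u v ⟨hne, x, hx, y, z, hxyz, hy, hz⟩
    exact ⟨hne.symm, x, hx, z, y, by rw [hxyz, Sym2.eq_swap], hz, hy⟩
  loopless := ⟨fun u => by rintro ⟨hne, -⟩; exact hne rfl⟩

lemma encode_spec {V : Type} (G : SimpleGraph V) {m : ℕ} (H : SimpleGraph (Fin m))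
    (hH : IsMinor H G) : ∃ T, decG G m T = H := by
  classical
  obtain ⟨φ, hconn, hdisj, hedge⟩ := hH
  choose A hA1 B hB1 hAB using hedge
  have hne : ∀ u, (φ u).Nonempty := fun u => Set.nonempty_coe_sort.1 (hconn u).nonempty
  choose r hr using hne
  have hsame : ∀ {a : V} {w w' : Fin m}, a ∈ φ w → a ∈ φ w' → w = w' := by
    intro a w w' h1 h2
    by_contra hww
    exact Set.disjoint_left.1 (hdisj w w' hww) h1 h2
  set C : Set G.edgeSet :=
    {x | ∃ (w : Fin m) (y z : V), (x : Sym2 V) = s(y, z) ∧ y ∈ φ w ∧ z ∈ φ w} with hC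
  set K : Set G.edgeSet :=
    {x | ∃ (u v : Fin m) (h : H.Adj u v),
        x = ⟨s(A u v h, B u v h), G.mem_edgeSet.2 (hAB u v h)⟩} with hK
  have hGCmem : ∀ {x y : V} {w : Fin m}, x ∈ φ w → (GCgraph G C).Adj x y → y ∈ φ w := by
    rintro x y w hx ⟨hadj, hmem⟩
    obtain ⟨w', y', z', hxy, hy', hz'⟩ := hmem
    have hxy' : x ∈ φ w' ∧ y ∈ φ w' := by
      rcases Sym2.eq_iff.1 hxy with ⟨rfl, rfl⟩ | ⟨rfl, rfl⟩
      · exact ⟨hy', hz'⟩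
      · exact ⟨hz', hy'⟩
    rw [hsame hx hxy'.1]; exact hxy'.2
  have hreach1 : ∀ (w : Fin m) (x : V), x ∈ φ w → (GCgraph G C).Reachable (r w) x := by
    intro w x hx
    have hcon := (hconn w).preconnected ⟨r w, hr w⟩ ⟨x, hx⟩
    let F : G.induce (φ w) →g GCgraph G C :=
      ⟨fun a => a.1, fun {a b} hab => ⟨hab, w, a.1, b.1, rfl, a.2, b.2⟩⟩
    exact hcon.map F
  have hreach2 : ∀ (w : Fin m) (x : V), (GCgraph G C).Reachable (r w) x → x ∈ φ w := by
    intro w x hx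
    obtain ⟨p⟩ := hx
    have haux : ∀ (y z : V), (GCgraph G C).Walk y z → y ∈ φ w → z ∈ φ w := by
      intro y z p
      induction p with
      | nil => exact id
      | cons h p ih => intro hy; exact ih (hGCmem hy h)
    exact haux _ _ p (hr w)
  refine ⟨(C, K, r), ?_⟩
  ext u v
  show (u ≠ v ∧ ∃ x ∈ K, ∃ y z : V, (x : Sym2 V) = s(y, z) ∧
      (GCgraph G C).Reachable (r u) y ∧ (GCgraph G C).Reachable (r v) z) ↔ H.Adj u v
  constructor
  · rintro ⟨hne, x, hxK, y, z, hxyz, hy, hz⟩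
    obtain ⟨u', v', h', rfl⟩ := hxK
    have hyu : y ∈ φ u := hreach2 u y hy
    have hzv : z ∈ φ v := hreach2 v z hz
    have : s(A u' v' h', B u' v' h') = s(y, z) := hxyz
    rcases Sym2.eq_iff.1 this with ⟨hA, hB⟩ | ⟨hA, hB⟩
    · have hu : u' = u := hsame (hA ▸ hA1 u' v' h') hyu
      have hv : v' = v := hsame (hB ▸ hB1 u' v' h') hzv
      exact hu ▸ hv ▸ h'
    · have hu : u' = v := hsame (hA ▸ hA1 u' v' h') hzv
      have hv : v' = u := hsame (hB ▸ hB1 u' v' h') hyu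
      exact (hu ▸ hv ▸ h' : H.Adj v u).symm
  · intro h
    refine ⟨H.ne_of_adj h, ⟨s(A u v h, B u v h), G.mem_edgeSet.2 (hAB u v h)⟩,
      ⟨u, v, h, rfl⟩, A u v h, B u v h, rfl, hreach1 u _ (hA1 u v h), hreach1 v _ (hB1 u v h)⟩

lemma nat_card_set (X : Type) [Finite X] : Nat.card (Set X) = 2 ^ Nat.card X := by
  classical
  have e : Set X ≃ (X → Prop) := Equiv.refl _
  rw [Nat.card_congr e, Nat.card_fun]
  congr 1
  rw [Nat.card_eq_fintype_card]
  exact Fintype.card_prop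

lemma minor_card_le {V : Type} [Fintype V] (G : SimpleGraph V) (m : ℕ) :
    Nat.card {H : SimpleGraph (Fin m) // IsMinor H G} ≤
      2 ^ Nat.card G.edgeSet * (2 ^ Nat.card G.edgeSet * Nat.card V ^ m) := by
  classical
  have hFinj : Function.Injective
      (fun X : {H : SimpleGraph (Fin m) // IsMinor H G} => (encode_spec G X.1 X.2).choose) := by
    intro X Y h
    dsimp only at h
    apply Subtype.ext
    rw [← (encode_spec G X.1 X.2).choose_spec, ← (encode_spec G Y.1 Y.2).choose_spec, h]
  have hle := Nat.card_le_card_of_injective _ hFinj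
  have hfm : Nat.card (Fin m) = m := by simp [Nat.card_eq_fintype_card]
  rwa [Nat.card_prod, Nat.card_prod, nat_card_set, Nat.card_fun, hfm] at hle

/-! ### Candidate graphs -/

section cand
variable (a b : ℕ)

def ιA (i : Fin a) : Fin (a + 18 * b) := ⟨i.1, by omega⟩

def βB (j : Fin 18) (l : Fin b) : Fin (a + 18 * b) :=
  ⟨a + (j.1 * b + l.1), by
    have h1 : (j.1 + 1) * b ≤ 18 * b := Nat.mul_le_mul_right b j.2
    rw [Nat.succ_mul] at h1
    have := l.2
    omega⟩

def Sg (g : Fin a → Fin 18 → Fin (b + 1)) : Set (Sym2 (Fin (a + 18 * b))) :=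
  {x | ∃ (i : Fin a) (j : Fin 18) (l : Fin b),
      (g i j : ℕ) = l.1 + 1 ∧ x = s(ιA a b i, βB a b j l)}

def Γg (g : Fin a → Fin 18 → Fin (b + 1)) : SimpleGraph (Fin (a + 18 * b)) :=
  SimpleGraph.fromEdgeSet (Sg a b g)

lemma ι_ne_β (i : Fin a) (j : Fin 18) (l : Fin b) : ιA a b i ≠ βB a b j l := by
  intro h
  have := congrArg Fin.val h
  simp only [ιA, βB] at this
  have := i.2
  omega

lemma β_inj {j j' : Fin 18} {l l' : Fin b} (h : βB a b j l = βB a b j' l') :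
    j = j' ∧ l = l' := by
  have hb : 0 < b := lt_of_le_of_lt (Nat.zero_le _) l.2
  have hv := congrArg Fin.val h
  simp only [βB] at hv
  have heq : l.1 + b * j.1 = l'.1 + b * j'.1 := by
    rw [Nat.mul_comm b j.1, Nat.mul_comm b j'.1]
    omega
  have hdiv : (l.1 + b * j.1) / b = (l'.1 + b * j'.1) / b := by rw [heq]
  rw [Nat.add_mul_div_left _ _ hb, Nat.add_mul_div_left _ _ hb,
    Nat.div_eq_of_lt l.2, Nat.div_eq_of_lt l'.2] at hdiv
  have hmod : (l.1 + b * j.1) % b = (l'.1 + b * j'.1) % b := by rw [heq]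
  rw [Nat.add_mul_mod_self_left, Nat.add_mul_mod_self_left,
    Nat.mod_eq_of_lt l.2, Nat.mod_eq_of_lt l'.2] at hmod
  exact ⟨Fin.ext (by omega), Fin.ext hmod⟩

lemma Γ_inj : Function.Injective (Γg a b) := by
  have key : ∀ g g', Γg a b g = Γg a b g' → ∀ i j, g i j ≠ 0 → g' i j = g i j := by
    intro g g' hgg i j h0
    have hv0 : (g i j : ℕ) ≠ 0 := by intro h; exact h0 (Fin.ext (by simp [h]))
    have hlt := (g i j).2
    have hlv : (g i j : ℕ) - 1 < b := by omega
    set l : Fin b := ⟨(g i j : ℕ) - 1, hlv⟩ with hl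
    have hmem : s(ιA a b i, βB a b j l) ∈ Sg a b g :=
      ⟨i, j, l, by simp only [hl]; omega, rfl⟩
    have hadj : (Γg a b g).Adj (ιA a b i) (βB a b j l) :=
      (SimpleGraph.fromEdgeSet_adj _).2 ⟨hmem, ι_ne_β a b i j l⟩
    rw [hgg] at hadj
    obtain ⟨hmem', -⟩ := (SimpleGraph.fromEdgeSet_adj _).1 hadj
    obtain ⟨i', j', l', hgi', heq⟩ := hmem'
    rcases Sym2.eq_iff.1 heq with ⟨h1, h2⟩ | ⟨h1, h2⟩
    · obtain ⟨hj, hl'⟩ := β_inj a b h2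
      have hv : (ιA a b i).1 = (ιA a b i').1 := congrArg Fin.val h1
      simp only [ιA] at hv
      have hi : i = i' := Fin.ext hv
      subst hi; subst hj; subst hl'
      refine Fin.ext ?_
      rw [hgi']
      have : l.1 = (g i j : ℕ) - 1 := rfl
      omega
    · exact (ι_ne_β a b i j' l' h1).elim
  intro g g' h
  funext i j
  by_cases h0 : g i j = 0
  · by_cases h0' : g' i j = 0
    · rw [h0, h0']
    · exact key g' g h.symm i j h0'
  · exact (key g g' h i j h0).symm

lemma Γ_card (hb : 0 < b) (g : Fin a → Fin 18 → Fin (b + 1)) :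
    Nat.card (Γg a b g).edgeSet ≤ 18 * a := by
  classical
  set f : Fin a × Fin 18 → Sym2 (Fin (a + 18 * b)) := fun q =>
    s(ιA a b q.1, βB a b q.2 ⟨(g q.1 q.2 : ℕ) - 1, by have := (g q.1 q.2).2; omega⟩) with hf
  have hsub : (Γg a b g).edgeSet ⊆ Set.range f := by
    rw [Γg, SimpleGraph.edgeSet_fromEdgeSet]
    rintro x ⟨⟨i, j, l, hg, rfl⟩, -⟩
    refine ⟨(i, j), ?_⟩
    have hl : (⟨(g i j : ℕ) - 1, by have := (g i j).2; omega⟩ : Fin b) = l :=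
      Fin.ext (show (g i j : ℕ) - 1 = l.1 by omega)
    simp only [hf]
    rw [hl]
  calc Nat.card (Γg a b g).edgeSet ≤ Nat.card (Set.range f) :=
        Nat.card_mono (Set.toFinite _) hsub
    _ ≤ Nat.card (Fin a × Fin 18) :=
        Nat.card_le_card_of_surjective _ Set.rangeFactorization_surjective
    _ = 18 * a := by
        simp [Nat.card_prod, Nat.card_eq_fintype_card, Nat.mul_comm]

end cand

/-! ### Numeric lemmas -/

lemma pow_aux2 : ∀ p : ℕ, 5 ≤ p → p + 7 ≤ 2 ^ (p - 1) := by
  intro p hp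
  induction p, hp using Nat.le_induction with
  | base => norm_num
  | succ n hn ih =>
    have h1 : n + 1 - 1 = n := by omega
    have h2 : n - 1 + 1 = n := by omega
    rw [h1, ← h2, pow_succ]
    omega

lemma pow_aux1 : ∀ p : ℕ, 5 ≤ p → 18 * p + 126 ≤ 13 * 2 ^ (p - 1) + 13 := by
  intro p hp
  induction p, hp using Nat.le_induction with
  | base => norm_num
  | succ n hn ih =>
    have h1 : n + 1 - 1 = n := by omega
    have h2 : n - 1 + 1 = n := by omega
    rw [h1, ← h2, pow_succ]
    omega

lemma pow_aux3 : ∀ t : ℕ, 19 ≤ t → 57 * t ≤ 2 ^ t := by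
  intro t ht
  induction t, ht using Nat.le_induction with
  | base => norm_num
  | succ n hn ih =>
    have h57 : 57 ≤ 2 ^ n := le_trans (by omega) ih
    rw [pow_succ]
    omega

/-! ### Main theorem -/

/-- For every graph `G` of size `s ≥ 2` there is a graph `H_G` of size at most
`20·s/log₂ s` that is not a minor of `G`. -/
theorem exists_non_minor_of_small_size :
    ∀ (V : Type) [Fintype V] (G : SimpleGraph V), 2 ≤ gsize G →
      ∃ (m : ℕ) (H : SimpleGraph (Fin m)),
        (gsize H : ℝ) ≤ 20 * (gsize G : ℝ) / Real.logb 2 (gsize G) ∧ ¬ IsMinor H G := by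
  intro V _ G hs
  classical
  set n := Nat.card V with hn
  set eG := Nat.card G.edgeSet with heG
  have hsdef : gsize G = n + eG := rfl
  set s := gsize G with hsd
  by_cases hsmall : s ≤ 2 ^ 19
  · refine ⟨n + 1, ⊥, ?_, aux_not_minor_of_card_lt G (by omega) ⊥⟩
    rw [gsize_bot]
    exact realA hs (by omega) hsmall
  · push_neg at hsmall
    set t := Nat.clog 2 s with ht
    set p := Nat.clog 2 t with hp
    have hs2 : 2 ≤ s := hs
    have hst : s ≤ 2 ^ t := Nat.le_pow_clog one_lt_two s
    have hts : 2 ^ (t - 1) < s := Nat.pow_pred_clog_lt_self one_lt_two (by omega)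
    have ht19 : 19 ≤ t := by
      have h1 : Nat.clog 2 (2 ^ 19) ≤ t := Nat.clog_mono_right 2 (by omega)
      rwa [Nat.clog_pow 2 19 one_lt_two] at h1
    have htp : t ≤ 2 ^ p := Nat.le_pow_clog one_lt_two t
    have hpt : 2 ^ (p - 1) < t := Nat.pow_pred_clog_lt_self one_lt_two (by omega)
    have hp5 : 5 ≤ p := by
      by_contra h
      have hp4 : p ≤ 4 := by omega
      have : 2 ^ p ≤ 2 ^ 4 := Nat.pow_le_pow_right (by norm_num) hp4
      omega
    have htp8 : p + 8 ≤ t := by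
      have := pow_aux2 p hp5
      omega
    set u := t - 7 - p with hu
    set b := 2 ^ u - 1 with hb
    set a := s / t + 1 with ha
    have hu1 : 1 ≤ u := by omega
    have hb1 : b + 1 = 2 ^ u := by
      have : (1:ℕ) ≤ 2 ^ u := Nat.one_le_two_pow
      omega
    have hbpos : 0 < b := by
      have : 2 ^ 1 ≤ 2 ^ u := Nat.pow_le_pow_right (by norm_num) hu1
      omega
    have hdm : t * (s / t) + s % t = s := Nat.div_add_mod s t
    have hmod : s % t < t := Nat.mod_lt s (by omega)
    have hat_le : a * t ≤ s + t := by
      rw [ha, Nat.add_mul, one_mul, Nat.mul_comm]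
      omega
    have hat_ge : s + 1 ≤ a * t := by
      rw [ha, Nat.add_mul, one_mul, Nat.mul_comm]
      omega
    have htb : t * b ≤ 2 ^ (t - 7) := by
      have h1 : t * (b + 1) ≤ 2 ^ p * 2 ^ u := by
        rw [hb1]; exact Nat.mul_le_mul_right _ htp
      rw [← pow_add] at h1
      have hpu : p + u = t - 7 := by omega
      rw [hpu] at h1
      have h2 : t * b ≤ t * (b + 1) := Nat.mul_le_mul_left _ (by omega)
      omega
    have h64 : 64 * 2 ^ (t - 7) = 2 ^ (t - 1) := by
      have h2 : (64 : ℕ) = 2 ^ 6 := by norm_num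
      rw [h2, ← pow_add]
      congr 1
      omega
    have h54 : 54 * 2 ^ (t - 7) < s := by
      have hpos : 0 < 2 ^ (t - 7) := pow_pos (by norm_num) _
      omega
    have hts' : t < s := by
      have h1 : t - 1 < 2 ^ (t - 1) := Nat.lt_two_pow_self
      omega
    have h18u : 5 * t ≤ 18 * u := by
      have h1 := pow_aux1 p hp5
      have h2 : 13 * 2 ^ (p - 1) + 13 ≤ 13 * t := by
        have h3 : 13 * (2 ^ (p - 1) + 1) ≤ 13 * t := Nat.mul_le_mul_left _ (by omega)
        omega
      omega
    have hmainexp : 2 * eG + t * (a + 18 * b) + 1 ≤ u * (18 * a) := by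
      have heGs : eG ≤ s := by omega
      have h2 : t * a ≤ s + t := by rw [Nat.mul_comm]; exact hat_le
      have h4 : 18 * (t * b) ≤ 18 * 2 ^ (t - 7) := Nat.mul_le_mul_left _ htb
      have hRHS : 5 * s + 5 ≤ u * (18 * a) := by
        calc 5 * s + 5 ≤ 5 * (s + 1) := by omega
          _ ≤ 5 * (a * t) := Nat.mul_le_mul_left _ hat_ge
          _ = a * (5 * t) := by ring
          _ ≤ a * (18 * u) := Nat.mul_le_mul_left _ h18u
          _ = u * (18 * a) := by ring
      have hexp : t * (a + 18 * b) = t * a + 18 * (t * b) := by ring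
      omega
    have hex : ∃ g : Fin a → Fin 18 → Fin (b + 1), ¬ IsMinor (Γg a b g) G := by
      by_contra hall
      push_neg at hall
      have hJ : Function.Injective
          (fun g : Fin a → Fin 18 → Fin (b + 1) =>
            (⟨Γg a b g, hall g⟩ : {H : SimpleGraph (Fin (a + 18 * b)) // IsMinor H G})) := by
        intro g g' hgg
        exact Γ_inj a b (congrArg Subtype.val hgg)
      have hcard := (Nat.card_le_card_of_injective _ hJ).trans (minor_card_le G (a + 18 * b))
      have hcardL : Nat.card (Fin a → Fin 18 → Fin (b + 1)) = 2 ^ (u * (18 * a)) := by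
        rw [Nat.card_fun, Nat.card_fun]
        simp only [Nat.card_eq_fintype_card, Fintype.card_fin]
        rw [hb1, ← pow_mul, ← pow_mul]
      rw [hcardL, ← heG, ← hn] at hcard
      have hn2t : n ≤ 2 ^ t := by omega
      have hRbound : 2 ^ eG * (2 ^ eG * n ^ (a + 18 * b)) ≤ 2 ^ (2 * eG + t * (a + 18 * b)) := by
        have h1 : n ^ (a + 18 * b) ≤ (2 ^ t) ^ (a + 18 * b) :=
          Nat.pow_le_pow_left hn2t _
        calc 2 ^ eG * (2 ^ eG * n ^ (a + 18 * b))
            ≤ 2 ^ eG * (2 ^ eG * (2 ^ t) ^ (a + 18 * b)) := by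
              exact Nat.mul_le_mul_left _ (Nat.mul_le_mul_left _ h1)
          _ = 2 ^ (2 * eG + t * (a + 18 * b)) := by
              rw [← pow_mul, ← pow_add, ← pow_add]
              congr 1
              ring
      have hlt : 2 ^ (2 * eG + t * (a + 18 * b)) < 2 ^ (u * (18 * a)) :=
        Nat.pow_lt_pow_right (by norm_num) (by omega)
      omega
    obtain ⟨g, hg⟩ := hex
    refine ⟨a + 18 * b, Γg a b g, ?_, hg⟩
    have hgs : gsize (Γg a b g) ≤ 19 * a + 18 * b := by
      have h1 := Γ_card a b hbpos g
      have h2 : Nat.card (Fin (a + 18 * b)) = a + 18 * b := by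
        simp [Nat.card_eq_fintype_card]
      rw [gsize, h2]
      omega
    have hnat : (19 * a + 18 * b) * t ≤ 20 * s := by
      have h1 : (19 * a + 18 * b) * t * 3 = 57 * (a * t) + 54 * (t * b) := by ring
      have h2 : 57 * (a * t) ≤ 57 * (s + t) := Nat.mul_le_mul_left _ hat_le
      have h3 : 54 * (t * b) ≤ 54 * 2 ^ (t - 7) := Nat.mul_le_mul_left _ htb
      have h5 := pow_aux3 t ht19
      have h6 : 2 ^ t = 2 * 2 ^ (t - 1) := by
        rw [← pow_succ']
        congr 1
        omega
      have h7 : (19 * a + 18 * b) * t * 3 ≤ 60 * s := by omega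
      omega
    -- move to ℝ
    have hLle : Real.logb 2 (s:ℝ) ≤ (t:ℝ) := by
      have h1 : Real.logb 2 (s:ℝ) ≤ Real.logb 2 ((2:ℝ) ^ t) := by
        apply Real.logb_le_logb_of_le one_lt_two (by exact_mod_cast (by omega : 0 < s))
        exact_mod_cast hst
      simpa [Real.logb_pow, Real.logb_self_eq_one one_lt_two] using h1
    have hLpos : (0:ℝ) < Real.logb 2 (s:ℝ) :=
      Real.logb_pos one_lt_two (by exact_mod_cast (by omega : 1 < s))
    have htpos : (0:ℝ) < (t:ℝ) := by exact_mod_cast (by omega : 0 < t)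
    calc (gsize (Γg a b g) : ℝ) ≤ ((19 * a + 18 * b : ℕ) : ℝ) := by exact_mod_cast hgs
      _ ≤ 20 * (s:ℝ) / (t:ℝ) := by
          rw [le_div_iff₀ htpos]
          exact_mod_cast hnat
      _ ≤ 20 * (s:ℝ) / Real.logb 2 (s:ℝ) :=
          div_le_div_of_nonneg_left (by positivity) hLpos hLle
end

section
/- Let T be an α-expander (0 < α < 1) and let E' be any subset of the edges of T. Then there exists a subgraph T' of T containing no edge of E' (i.e., T' ⊆ T \ E') such that T' is an (α/4)-expander and |V(T')| ≥ |V(T)| − 4|E'|/α. -/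
open Set
set_option linter.unusedSectionVars false


variable {V : Type} [Fintype V]

/-- count of ordered pairs in A×B satisfying r -/
noncomputable def pcnt (r : V → V → Prop) (A B : Set V) : ℕ :=
  {p : V × V | p.1 ∈ A ∧ p.2 ∈ B ∧ r p.1 p.2}.ncard

lemma pcnt_eq_cutCard (G : SimpleGraph V) (A B : Set V) :
    cutCard G A B = pcnt G.Adj A B := by
  rw [pcnt, ← Nat.card_coe_set_eq]
  rfl

lemma pcnt_mono {r r' : V → V → Prop} {A B A' B' : Set V}
    (hA : A ⊆ A') (hB : B ⊆ B') (hr : ∀ a b, r a b → r' a b) :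
    pcnt r A B ≤ pcnt r' A' B' := by
  unfold pcnt
  apply Set.ncard_le_ncard
  · rintro ⟨a,b⟩ ⟨h1,h2,h3⟩; exact ⟨hA h1, hB h2, hr a b h3⟩
  · exact Set.toFinite _

lemma pcnt_union_right {r : V → V → Prop} {A B C : Set V} (h : Disjoint B C) :
    pcnt r A (B ∪ C) = pcnt r A B + pcnt r A C := by
  unfold pcnt
  rw [show {p : V × V | p.1 ∈ A ∧ p.2 ∈ B ∪ C ∧ r p.1 p.2}
      = {p : V × V | p.1 ∈ A ∧ p.2 ∈ B ∧ r p.1 p.2} ∪ {p : V × V | p.1 ∈ A ∧ p.2 ∈ C ∧ r p.1 p.2} by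
    ext ⟨a,b⟩; simp only [Set.mem_setOf_eq, Set.mem_union]; tauto]
  rw [Set.ncard_union_eq]
  · rw [Set.disjoint_left]; rintro ⟨a,b⟩ ⟨_,h2,_⟩ ⟨_,h2',_⟩
    exact Set.disjoint_left.mp h h2 h2'

lemma pcnt_union_left {r : V → V → Prop} {A B C : Set V} (h : Disjoint A B) :
    pcnt r (A ∪ B) C = pcnt r A C + pcnt r B C := by
  unfold pcnt
  rw [show {p : V × V | p.1 ∈ A ∪ B ∧ p.2 ∈ C ∧ r p.1 p.2}
      = {p : V × V | p.1 ∈ A ∧ p.2 ∈ C ∧ r p.1 p.2} ∪ {p : V × V | p.1 ∈ B ∧ p.2 ∈ C ∧ r p.1 p.2} by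
    ext ⟨a,b⟩; simp only [Set.mem_setOf_eq, Set.mem_union]; tauto]
  rw [Set.ncard_union_eq]
  · rw [Set.disjoint_left]; rintro ⟨a,b⟩ ⟨h1,_,_⟩ ⟨h1',_,_⟩
    exact Set.disjoint_left.mp h h1 h1'

lemma pcnt_symm {r : V → V → Prop} (hr : Symmetric r) (A B : Set V) :
    pcnt r A B = pcnt r B A := by
  unfold pcnt
  rw [show {p : V × V | p.1 ∈ B ∧ p.2 ∈ A ∧ r p.1 p.2}
      = Prod.swap '' {p : V × V | p.1 ∈ A ∧ p.2 ∈ B ∧ r p.1 p.2} by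
    ext ⟨a,b⟩
    simp only [Set.mem_setOf_eq, Set.mem_image, Prod.exists, Prod.swap_prod_mk, Prod.mk.injEq]
    constructor
    · rintro ⟨h1,h2,h3⟩; exact ⟨b,a,⟨h2,h1,hr h3⟩,rfl,rfl⟩
    · rintro ⟨x,y,⟨h1,h2,h3⟩,rfl,rfl⟩; exact ⟨h2,h1,hr h3⟩]
  rw [Set.ncard_image_of_injective _ Prod.swap_injective]

lemma val_image_compl {S : Set V} (A : Set ↥S) :
    Subtype.val '' Aᶜ = S \ (Subtype.val '' A) := by
  ext x
  constructor
  · rintro ⟨a, ha, rfl⟩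
    refine ⟨a.2, fun h => ha ?_⟩
    obtain ⟨b, hb, hba⟩ := h
    rwa [show b = a from Subtype.ext hba] at hb
  · rintro ⟨hx, h⟩
    exact ⟨⟨x, hx⟩, fun hA => h ⟨⟨x, hx⟩, hA, rfl⟩, rfl⟩

lemma card_val_image {S : Set V} (A : Set ↥S) :
    (Nat.card ↥A : ℕ) = (Subtype.val '' A).ncard := by
  rw [Set.ncard_image_of_injective _ Subtype.val_injective, Nat.card_coe_set_eq]

noncomputable def delSub (T : SimpleGraph V) (E' : Set (Sym2 V)) (S : Set V) : T.Subgraph where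
  verts := S
  Adj a b := a ∈ S ∧ b ∈ S ∧ (T.deleteEdges E').Adj a b
  adj_sub h := (SimpleGraph.deleteEdges_adj.mp h.2.2).1
  edge_vert h := h.1
  symm := ⟨fun a b h => ⟨h.2.1, h.1, h.2.2.symm⟩⟩

lemma cut_transfer (T : SimpleGraph V) (E' : Set (Sym2 V)) (S : Set V)
    (A : Set ↥(delSub T E' S).verts) :
    cutCard (delSub T E' S).coe A Aᶜ
      = pcnt (T.deleteEdges E').Adj (Subtype.val '' A) (Subtype.val '' Aᶜ) := by
  rw [pcnt, ← Nat.card_coe_set_eq, cutCard]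
  refine Nat.card_congr (Equiv.ofBijective
    (fun p => ⟨(p.1.1.1, p.1.2.1), ⟨p.1.1, p.2.1, rfl⟩, ⟨p.1.2, p.2.2.1, rfl⟩,
      p.2.2.2.2.2⟩) ⟨?_, ?_⟩)
  · rintro ⟨⟨a,b⟩,_⟩ ⟨⟨c,d⟩,_⟩ h
    simp only [Subtype.mk.injEq, Prod.mk.injEq] at h ⊢
    exact ⟨Subtype.ext h.1, Subtype.ext h.2⟩
  · rintro ⟨q, hq1, hq2, hadj⟩
    obtain ⟨a, ha, ha2⟩ := hq1
    obtain ⟨b, hb, hb2⟩ := hq2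
    refine ⟨⟨(a,b), ha, hb, a.2, b.2, by rw [ha2, hb2]; exact hadj⟩, ?_⟩
    exact Subtype.ext (Prod.ext ha2 hb2)

lemma pcnt_le_add {r r1 r2 : V → V → Prop} (h : ∀ a b, r a b → r1 a b ∨ r2 a b) (A B : Set V) :
    pcnt r A B ≤ pcnt r1 A B + pcnt r2 A B := by
  unfold pcnt
  refine le_trans (Set.ncard_le_ncard ?_ (Set.toFinite _)) (Set.ncard_union_le _ _)
  rintro ⟨a,b⟩ ⟨h1,h2,h3⟩
  rcases h a b h3 with h'|h'
  · exact Or.inl ⟨h1,h2,h'⟩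
  · exact Or.inr ⟨h1,h2,h'⟩

lemma pcnt_empty_right (r : V → V → Prop) (A : Set V) : pcnt r A ∅ = 0 := by
  unfold pcnt
  rw [show {p : V × V | p.1 ∈ A ∧ p.2 ∈ (∅ : Set V) ∧ r p.1 p.2} = ∅ by
    ext ⟨a,b⟩; simp]
  exact Set.ncard_empty _

/-- potential: E'-incidences from S plus boundary edges of the deleted graph -/
noncomputable def pot (T : SimpleGraph V) (E' : Set (Sym2 V)) (S : Set V) : ℕ :=
  pcnt (fun a b => s(a,b) ∈ E') S Set.univ + pcnt (T.deleteEdges E').Adj S Sᶜ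

lemma pcnt_inE_le (T : SimpleGraph V) (E' : Set (Sym2 V)) (hE' : E' ⊆ T.edgeSet)
    (A B : Set V) :
    pcnt (fun a b => s(a,b) ∈ E') A B ≤ 2 * Nat.card ↥E' := by
  classical
  letI : LinearOrder V := LinearOrder.lift' (Fintype.equivFin V) (Fintype.equivFin V).injective
  rw [pcnt, ← Nat.card_coe_set_eq]
  have h2 : Nat.card (↥E' × Bool) = 2 * Nat.card ↥E' := by
    rw [Nat.card_prod, Nat.card_eq_fintype_card (α := Bool), Fintype.card_bool]
    ring
  rw [← h2]
  have : Finite ↥E' := Set.toFinite E'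
  apply Nat.card_le_card_of_injective
    (f := fun p => ((⟨s(p.1.1, p.1.2), p.2.2.2⟩ : ↥E'), decide (p.1.1 ≤ p.1.2)))
  rintro ⟨⟨a,b⟩,hab⟩ ⟨⟨c,d⟩,hcd⟩ h
  simp only [Prod.mk.injEq, Subtype.mk.injEq, decide_eq_decide] at h
  obtain ⟨hs, hdec⟩ := h
  have hne : a ≠ b := by
    intro hab'
    exact (T.irrefl) (by have := hE' hab.2.2; rw [hab'] at this; exact this)
  rw [Sym2.eq_iff] at hs
  rcases hs with ⟨rfl, rfl⟩ | ⟨rfl, rfl⟩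
  · rfl
  · exfalso
    rcases le_total a b with hle | hle
    · have : b ≤ a := hdec.mp hle
      exact hne (le_antisymm hle this)
    · have : a ≤ b := hdec.mpr hle
      exact hne (le_antisymm this hle)

lemma pot_univ_le (T : SimpleGraph V) (E' : Set (Sym2 V)) (hE' : E' ⊆ T.edgeSet) :
    pot T E' Set.univ ≤ 2 * Nat.card ↥E' := by
  rw [pot, Set.compl_univ, pcnt_empty_right, add_zero]
  exact pcnt_inE_le T E' hE' _ _


lemma key (T : SimpleGraph V) (α : ℝ) (hα0 : 0 < α) (hT : IsExpander T α)
    (E' : Set (Sym2 V)) (hE' : E' ⊆ T.edgeSet) :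
    ∀ n (S : Set V), S.ncard ≤ n →
      ∃ S' : Set V, S' ⊆ S ∧ IsExpander (delSub T E' S').coe (α/4) ∧
        (α/2) * ((S.ncard : ℝ) - (S'.ncard : ℝ)) + (pot T E' S' : ℝ) ≤ (pot T E' S : ℝ) := by
  intro n
  induction n with
  | zero =>
    intro S hS
    refine ⟨S, subset_rfl, ?_, by simp⟩
    have hSe : S = ∅ := (Set.ncard_eq_zero (Set.toFinite S)).mp (Nat.le_zero.mp hS)
    intro A hA _
    obtain ⟨a, _⟩ := hA
    exact (Set.eq_empty_iff_forall_notMem.mp hSe ↑a a.2).elim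
  | succ n ih =>
    intro S hS
    by_cases hgood : IsExpander (delSub T E' S).coe (α/4)
    · exact ⟨S, subset_rfl, hgood, by simp⟩
    rw [IsExpander] at hgood
    push_neg at hgood
    obtain ⟨A, hAne, hAcne, hcut⟩ := hgood
    -- common step
    have step : ∀ C D : Set V, C ⊆ S → D ⊆ S → C ∪ D = S → Disjoint C D →
        C.Nonempty → D.Nonempty → C.ncard ≤ D.ncard →
        ((pcnt (T.deleteEdges E').Adj C D : ℝ) < α/4 * C.ncard) →
        ∃ S' : Set V, S' ⊆ S ∧ IsExpander (delSub T E' S').coe (α/4) ∧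
          (α/2) * ((S.ncard : ℝ) - (S'.ncard : ℝ)) + (pot T E' S' : ℝ) ≤ (pot T E' S : ℝ) := by
      intro C D hCS hDS hU hdisj hCne hDne hle hc
      set G := T.deleteEdges E' with hG
      have hGsymm : Symmetric G.Adj := fun _ _ h => h.symm
      have hScard : S.ncard = C.ncard + D.ncard := by
        rw [← hU, Set.ncard_union_eq hdisj (Set.toFinite _) (Set.toFinite _)]
      have hCcompl : Cᶜ = D ∪ Sᶜ := by
        ext x
        simp only [Set.mem_compl_iff, Set.mem_union]
        constructor
        · intro hx
          by_cases hxS : x ∈ S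
          · rw [← hU] at hxS
            rcases hxS with h | h
            · exact absurd h hx
            · exact Or.inl h
          · exact Or.inr hxS
        · rintro (h | h)
          · exact Set.disjoint_right.mp hdisj h
          · exact fun hxC => h (hCS hxC)
      have hDcompl : Dᶜ = C ∪ Sᶜ := by
        ext x
        simp only [Set.mem_compl_iff, Set.mem_union]
        constructor
        · intro hx
          by_cases hxS : x ∈ S
          · rw [← hU] at hxS
            rcases hxS with h | h
            · exact Or.inl h
            · exact absurd h hx
          · exact Or.inr hxS
        · rintro (h | h)
          · exact Set.disjoint_left.mp hdisj h
          · exact fun hxD => h (hDS hxD)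
      have hdisjDSc : Disjoint D (Sᶜ : Set V) := by
        rw [Set.disjoint_left]; intro x hx hx'; exact hx' (hDS hx)
      have hdisjCSc : Disjoint C (Sᶜ : Set V) := by
        rw [Set.disjoint_left]; intro x hx hx'; exact hx' (hCS hx)
      -- expansion of T at C
      have hCc_ne : (Cᶜ : Set V).Nonempty := by
        obtain ⟨d, hd⟩ := hDne
        exact ⟨d, Set.disjoint_right.mp hdisj hd⟩
      have hmin : min ((Nat.card ↥C : ℝ)) ((Nat.card ↥(Cᶜ : Set V) : ℝ)) = (C.ncard : ℝ) := by
        rw [Nat.card_coe_set_eq, Nat.card_coe_set_eq]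
        apply min_eq_left
        have : C.ncard ≤ (Cᶜ : Set V).ncard :=
          le_trans hle (Set.ncard_le_ncard
            (fun x hx => Set.disjoint_right.mp hdisj hx) (Set.toFinite _))
        exact_mod_cast this
      have h1 : α * (C.ncard : ℝ) ≤ (cutCard T C Cᶜ : ℝ) := by
        have := hT C hCne hCc_ne
        rwa [hmin] at this
      have h2 : cutCard T C Cᶜ ≤ pcnt G.Adj C Cᶜ + pcnt (fun a b => s(a,b) ∈ E') C Cᶜ := by
        rw [pcnt_eq_cutCard]
        apply pcnt_le_add
        intro a b hab
        by_cases hmem : s(a,b) ∈ E'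
        · exact Or.inr hmem
        · exact Or.inl ((SimpleGraph.deleteEdges_adj).mpr ⟨hab, hmem⟩)
      have h3 : pcnt G.Adj C Cᶜ = pcnt G.Adj C D + pcnt G.Adj C Sᶜ := by
        rw [hCcompl, pcnt_union_right hdisjDSc]
      have h4 : pcnt (fun a b => s(a,b) ∈ E') C Cᶜ ≤ pcnt (fun a b => s(a,b) ∈ E') C Set.univ :=
        pcnt_mono subset_rfl (Set.subset_univ _) (fun _ _ h => h)
      -- potential identities
      have hIE : pcnt (fun a b => s(a,b) ∈ E') S Set.univ
          = pcnt (fun a b => s(a,b) ∈ E') C Set.univ + pcnt (fun a b => s(a,b) ∈ E') D Set.univ := by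
        rw [← hU, pcnt_union_left hdisj]
      have hBd : pcnt G.Adj S Sᶜ = pcnt G.Adj C Sᶜ + pcnt G.Adj D Sᶜ := by
        have := pcnt_union_left (r := G.Adj) (C := Sᶜ) hdisj
        rwa [hU] at this
      have hBdD : pcnt G.Adj D Dᶜ = pcnt G.Adj C D + pcnt G.Adj D Sᶜ := by
        rw [hDcompl, pcnt_union_right hdisjCSc, pcnt_symm hGsymm D C]
      -- recurse on D
      have hDlt : D.ncard ≤ n := by
        have hCpos : 0 < C.ncard := (Set.ncard_pos (Set.toFinite C)).mpr hCne
        omega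
      obtain ⟨S', hS'D, hexp, hineq⟩ := ih D hDlt
      refine ⟨S', hS'D.trans hDS, hexp, ?_⟩
      have hpotstep : (pot T E' D : ℝ) + α/2 * C.ncard ≤ (pot T E' S : ℝ) := by
        have e1 : (pot T E' S : ℝ) = (pcnt (fun a b => s(a,b) ∈ E') C Set.univ : ℝ)
            + (pcnt (fun a b => s(a,b) ∈ E') D Set.univ : ℝ)
            + (pcnt G.Adj C Sᶜ : ℝ) + (pcnt G.Adj D Sᶜ : ℝ) := by
          rw [pot, hIE, hBd]; push_cast; ring
        have e2 : (pot T E' D : ℝ) = (pcnt (fun a b => s(a,b) ∈ E') D Set.univ : ℝ)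
            + (pcnt G.Adj C D : ℝ) + (pcnt G.Adj D Sᶜ : ℝ) := by
          rw [pot, hBdD]; push_cast; ring
        have f1 : α * (C.ncard : ℝ) ≤ (pcnt G.Adj C D : ℝ) + (pcnt G.Adj C Sᶜ : ℝ)
            + (pcnt (fun a b => s(a,b) ∈ E') C Set.univ : ℝ) := by
          have c2 : (cutCard T C Cᶜ : ℝ) ≤ (pcnt G.Adj C Cᶜ : ℝ) + (pcnt (fun a b => s(a,b) ∈ E') C Cᶜ : ℝ) := by
            exact_mod_cast h2
          have c3 : (pcnt G.Adj C Cᶜ : ℝ) = (pcnt G.Adj C D : ℝ) + (pcnt G.Adj C Sᶜ : ℝ) := by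
            exact_mod_cast h3
          have c4 : (pcnt (fun a b => s(a,b) ∈ E') C Cᶜ : ℝ) ≤ (pcnt (fun a b => s(a,b) ∈ E') C Set.univ : ℝ) := by
            exact_mod_cast h4
          linarith
        rw [e1, e2]
        linarith
      have hScard' : (S.ncard : ℝ) = (C.ncard : ℝ) + (D.ncard : ℝ) := by
        exact_mod_cast hScard
      have hring : α/2 * ((S.ncard : ℝ) - (S'.ncard : ℝ))
          = α/2 * (C.ncard : ℝ) + α/2 * ((D.ncard : ℝ) - (S'.ncard : ℝ)) := by
        rw [hScard']; ring
      linarith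
    -- use the counterexample cut
    set A₀ : Set V := Subtype.val '' A with hA₀
    set B₀ : Set V := Subtype.val '' Aᶜ with hB₀
    have hB₀eq : B₀ = S \ A₀ := val_image_compl A
    have hA₀S : A₀ ⊆ S := by rintro x ⟨a, _, rfl⟩; exact a.2
    have hB₀S : B₀ ⊆ S := by rw [hB₀eq]; exact Set.diff_subset
    have hU : A₀ ∪ B₀ = S := by
      rw [hB₀eq, Set.union_diff_cancel hA₀S]
    have hdisj : Disjoint A₀ B₀ := by rw [hB₀eq]; exact Set.disjoint_sdiff_right
    have hA₀ne : A₀.Nonempty := hAne.image _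
    have hB₀ne : B₀.Nonempty := hAcne.image _
    have hcut' : (pcnt (T.deleteEdges E').Adj A₀ B₀ : ℝ)
        < α/4 * min (A₀.ncard) (B₀.ncard) := by
      rw [← cut_transfer T E' S A]
      rw [card_val_image A, card_val_image Aᶜ] at hcut
      exact_mod_cast hcut
    rcases le_total A₀.ncard B₀.ncard with hle | hle
    · refine step A₀ B₀ hA₀S hB₀S hU hdisj hA₀ne hB₀ne hle ?_
      rw [min_eq_left hle] at hcut'
      exact_mod_cast hcut'
    · refine step B₀ A₀ hB₀S hA₀S (by rw [Set.union_comm]; exact hU) hdisj.symm hB₀ne hA₀ne hle ?_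
      rw [min_eq_right hle] at hcut'
      rw [pcnt_symm (fun _ _ h => h.symm) B₀ A₀]
      exact_mod_cast hcut'

/-- Let `T` be an `α`-expander (`0 < α < 1`) and `E'` a set of its edges. Then there is a
subgraph `T' ⊆ T \\ E'` (a subgraph of `T` using no edge of `E'`) that is an
`(α/4)`-expander with `|V(T')| ≥ |V(T)| − 4|E'|/α`. -/
theorem expander_delete_edges (V : Type) [Fintype V] (T : SimpleGraph V) (α : ℝ)
    (hα0 : 0 < α) (hα1 : α < 1) (hT : IsExpander T α)
    (E' : Set (Sym2 V)) (hE' : E' ⊆ T.edgeSet) :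
    ∃ T' : T.Subgraph,
      Disjoint T'.edgeSet E' ∧
      IsExpander T'.coe (α / 4) ∧
      (Nat.card V : ℝ) - 4 * (Nat.card ↥E' : ℝ) / α ≤ (Nat.card ↥T'.verts : ℝ) := by
  obtain ⟨S', hsub, hexp, hineq⟩ :=
    key T α hα0 hT E' hE' ((Set.univ : Set V).ncard) Set.univ le_rfl
  refine ⟨delSub T E' S', ?_, hexp, ?_⟩
  · rw [Set.disjoint_left]
    intro e he heE'
    induction e using Sym2.ind with
    | _ a b =>
      have hadj := (SimpleGraph.Subgraph.mem_edgeSet).mp he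
      exact (SimpleGraph.deleteEdges_adj.mp hadj.2.2).2 heE'
  · have hv : Nat.card ↥(delSub T E' S').verts = S'.ncard := Nat.card_coe_set_eq S'
    have hV : Nat.card V = (Set.univ : Set V).ncard := (Set.ncard_univ V).symm
    have hpu : pot T E' Set.univ ≤ 2 * Nat.card ↥E' := pot_univ_le T E' hE'
    have h5 : (((Set.univ : Set V).ncard : ℝ)) - (S'.ncard : ℝ) ≤ 4 * (Nat.card ↥E' : ℝ) / α := by
      rw [le_div_iff₀ hα0]
      have hp' : (0:ℝ) ≤ (pot T E' S' : ℝ) := Nat.cast_nonneg _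
      have hpu' : (pot T E' Set.univ : ℝ) ≤ 2 * (Nat.card ↥E' : ℝ) := by exact_mod_cast hpu
      nlinarith [hineq]
    rw [hv, hV]
    linarith [h5]
end

section
/- Let T be an α'-expander for some 0 < α' < 1, with |V(T)| ≤ n and maximum vertex degree at most d. Let Z, Z' ⊆ V(T) be non-empty vertex subsets with |Z| = z and |Z'| = z'. Then there is a path in T connecting a vertex of Z to a vertex of Z' whose length is at most (8d/α')·(log₂(n/z) + log₂(n/z')). In particular, for every pair v, v' of vertices of T there is a path of length at most 16·d·log₂ n / α' connecting v to v' in T. -/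
open SimpleGraph Set

section Aux

variable {V : Type} [Fintype V] {T : SimpleGraph V} {α' : ℝ} {d : ℕ}

/-- Ball of radius `k` around `S`, via walks. -/
def wball (T : SimpleGraph V) (S : Set V) (k : ℕ) : Set V :=
  {v | ∃ u ∈ S, ∃ p : T.Walk u v, p.length ≤ k}

lemma subset_wball (S : Set V) (k : ℕ) : S ⊆ wball T S k :=
  fun v hv => ⟨v, hv, Walk.nil, by simp⟩

lemma wball_mono (S : Set V) {k l : ℕ} (h : k ≤ l) : wball T S k ⊆ wball T S l := by
  rintro v ⟨u, hu, p, hp⟩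
  exact ⟨u, hu, p, hp.trans h⟩

lemma cut_le_boundary (hd : DegLE T d) (A : Set V) :
    cutCard T A Aᶜ ≤ d * {v | v ∉ A ∧ ∃ u ∈ A, T.Adj u v}.ncard := by
  classical
  set S := {v | v ∉ A ∧ ∃ u ∈ A, T.Adj u v} with hSdef
  have hstep : cutCard T A Aᶜ ≤ Nat.card (Σ b : ↥S, {a : V // T.Adj (b : V) a}) := by
    apply Nat.card_le_card_of_injective
      (fun p : {p : V × V // p.1 ∈ A ∧ p.2 ∈ Aᶜ ∧ T.Adj p.1 p.2} =>
        (⟨⟨p.1.2, ⟨p.2.2.1, p.1.1, p.2.1, p.2.2.2⟩⟩, ⟨p.1.1, p.2.2.2.symm⟩⟩ :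
          Σ b : ↥S, {a : V // T.Adj (b : V) a}))
    rintro ⟨⟨a, b⟩, ha, hb, hab⟩ ⟨⟨a', b'⟩, ha', hb', hab'⟩ h
    have h2 : ((a, b) : V × V) = (a', b') :=
      congrArg (fun r : Σ b : ↥S, {a : V // T.Adj (b : V) a} =>
        (((r.2 : V), (r.1 : V)) : V × V)) h
    simp only [Prod.mk.injEq] at h2
    obtain ⟨h3, h4⟩ := h2
    subst h3
    subst h4
    rfl
  calc cutCard T A Aᶜ
      ≤ Nat.card (Σ b : ↥S, {a : V // T.Adj (b : V) a}) := hstep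
    _ = ∑ b : ↥S, Fintype.card {a : V // T.Adj (b : V) a} := by
        rw [Nat.card_eq_fintype_card, Fintype.card_sigma]
    _ ≤ ∑ _b : ↥S, d := by
        refine Finset.sum_le_sum fun b _ => ?_
        have := hd (b : V)
        rwa [Nat.card_eq_fintype_card] at this
    _ = Fintype.card ↥S * d := by
        rw [Finset.sum_const, Finset.card_univ, smul_eq_mul]
    _ = d * S.ncard := by
        rw [← Nat.card_eq_fintype_card, Nat.card_coe_set_eq, mul_comm]

lemma growth (hα0 : 0 < α') (hT : IsExpander T α') (hd : DegLE T d) (hd1 : 1 ≤ d)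
    {A : Set V} (hA : A.Nonempty) (h2 : 2 * A.ncard ≤ Nat.card V) :
    (1 + α' / d) * A.ncard ≤ ((A ∪ {v | ∃ u ∈ A, T.Adj u v}).ncard : ℝ) := by
  classical
  have hsum : A.ncard + Aᶜ.ncard = Nat.card V := by
    simpa [Set.ncard_univ] using Set.ncard_add_ncard_compl A
  have hApos : 0 < A.ncard := (Set.ncard_pos (toFinite A)).mpr hA
  have hAc : Aᶜ.Nonempty := by
    rw [Set.nonempty_iff_ne_empty]
    intro h
    rw [h, Set.ncard_empty] at hsum
    omega
  have hmin : ((Nat.card ↥A : ℝ) ⊓ (Nat.card ↥(Aᶜ) : ℝ)) = (A.ncard : ℝ) := by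
    rw [← Nat.cast_min, Nat.card_coe_set_eq, Nat.card_coe_set_eq]
    norm_cast
    exact min_eq_left (by omega)
  have hcut : α' * A.ncard ≤ (cutCard T A Aᶜ : ℝ) := by
    have := hT A hA hAc
    rwa [hmin] at this
  set S := {v | v ∉ A ∧ ∃ u ∈ A, T.Adj u v} with hSdef
  have hcle := cut_le_boundary hd A
  have hdpos : (0 : ℝ) < d := by exact_mod_cast hd1
  have hkey : α' * A.ncard ≤ (d : ℝ) * S.ncard := by
    refine hcut.trans ?_
    exact_mod_cast hcle
  have hunion : A ∪ {v | ∃ u ∈ A, T.Adj u v} = A ∪ S := by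
    ext v
    by_cases hv : v ∈ A <;> simp [hSdef, hv]
  have hdisj : Disjoint A S := Set.disjoint_left.mpr fun v hv hvS => hvS.1 hv
  have hcard : (A ∪ S).ncard = A.ncard + S.ncard := Set.ncard_union_eq hdisj
  rw [hunion, hcard]
  push_cast
  have hS : α' / d * A.ncard ≤ (S.ncard : ℝ) := by
    rw [div_mul_eq_mul_div, div_le_iff₀ hdpos]
    nlinarith [hkey]
  nlinarith [hS]

lemma wball_growth (hα0 : 0 < α') (hT : IsExpander T α') (hd : DegLE T d) (hd1 : 1 ≤ d)
    {S : Set V} (hS : S.Nonempty) :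
    ∀ k : ℕ, (Nat.card V : ℝ) < 2 * (wball T S k).ncard ∨
      (1 + α' / d) ^ k * S.ncard ≤ ((wball T S k).ncard : ℝ) := by
  intro k
  induction k with
  | zero =>
    right
    simpa using (Nat.cast_le (α := ℝ)).mpr
      (Set.ncard_le_ncard (subset_wball S 0) (toFinite _))
  | succ k ih =>
    have hmono : (wball T S k).ncard ≤ (wball T S (k + 1)).ncard :=
      Set.ncard_le_ncard (wball_mono S (Nat.le_succ k)) (toFinite _)
    rcases ih with h | h
    · left
      have : ((wball T S k).ncard : ℝ) ≤ (wball T S (k + 1)).ncard := by exact_mod_cast hmono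
      linarith
    · by_cases h2 : 2 * (wball T S k).ncard ≤ Nat.card V
      · right
        have hne : (wball T S k).Nonempty := hS.mono (subset_wball S k)
        have hg := growth hα0 hT hd hd1 hne h2
        have hsub : wball T S k ∪ {v | ∃ u ∈ wball T S k, T.Adj u v} ⊆ wball T S (k + 1) := by
          rintro v (hv | ⟨u, ⟨w, hw, p, hp⟩, hadj⟩)
          · exact wball_mono S (Nat.le_succ k) hv
          · exact ⟨w, hw, p.concat hadj, by rw [Walk.length_concat]; omega⟩
        have hle : ((wball T S k ∪ {v | ∃ u ∈ wball T S k, T.Adj u v}).ncard : ℝ) ≤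
            ((wball T S (k + 1)).ncard : ℝ) := by
          exact_mod_cast Set.ncard_le_ncard hsub (toFinite _)
        have hx : (0 : ℝ) ≤ 1 + α' / d := by positivity
        calc (1 + α' / d) ^ (k + 1) * S.ncard
            = (1 + α' / d) * ((1 + α' / d) ^ k * S.ncard) := by ring
          _ ≤ (1 + α' / d) * (wball T S k).ncard := by
              exact mul_le_mul_of_nonneg_left h hx
          _ ≤ _ := hg.trans hle
      · left
        push_neg at h2
        have h2' : (Nat.card V : ℝ) < 2 * (wball T S k).ncard := by exact_mod_cast h2
        have : ((wball T S k).ncard : ℝ) ≤ (wball T S (k + 1)).ncard := by exact_mod_cast hmono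
        linarith

lemma one_le_d [Nontrivial V] (hα0 : 0 < α') (hT : IsExpander T α') (hd : DegLE T d) :
    1 ≤ d := by
  obtain ⟨v, w, hvw⟩ := exists_pair_ne V
  have h1 : (({v} : Set V)ᶜ).Nonempty := ⟨w, fun h => hvw (by simpa using h.symm)⟩
  have hle := hT {v} ⟨v, rfl⟩ h1
  have hc1 : Nat.card ↥({v} : Set V) = 1 := by
    simp [Nat.card_coe_set_eq]
  have hc2 : 1 ≤ Nat.card ↥(({v} : Set V)ᶜ) := by
    have : Nonempty ↥(({v} : Set V)ᶜ) := h1.to_subtype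
    exact Nat.card_pos
  have hmin : (1 : ℝ) ≤ ((Nat.card ↥({v} : Set V) : ℝ) ⊓ (Nat.card ↥(({v} : Set V)ᶜ) : ℝ)) := by
    refine le_min ?_ ?_
    · exact_mod_cast hc1.ge
    · exact_mod_cast hc2
  have hcutpos : 0 < cutCard T {v} ({v} : Set V)ᶜ := by
    rcases Nat.eq_zero_or_pos (cutCard T {v} ({v} : Set V)ᶜ) with h | h
    · exfalso
      rw [h] at hle
      push_cast at hle
      nlinarith
    · exact h
  have hpos : 0 < Nat.card {p : V × V // p.1 ∈ ({v} : Set V) ∧ p.2 ∈ ({v} : Set V)ᶜ ∧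
      T.Adj p.1 p.2} := hcutpos
  obtain ⟨⟨⟨⟨a, b⟩, ha, hb, hab⟩⟩, -⟩ := Nat.card_pos_iff.mp hpos
  have hav : a = v := ha
  subst hav
  have hnb : Nonempty ↥{w : V | T.Adj a w} := ⟨⟨b, hab⟩⟩
  have : 0 < Nat.card ↥{w : V | T.Adj a w} := Nat.card_pos
  exact le_trans this (hd a)

lemma core (V : Type) [Fintype V] (T : SimpleGraph V) (α' : ℝ) (n d : ℕ)
    (hα0 : 0 < α') (hα1 : α' < 1) (hT : IsExpander T α')
    (hn : Nat.card V ≤ n) (hd : DegLE T d)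
    (Z Z' : Set V) (hZne : Z.Nonempty) (hZ'ne : Z'.Nonempty) :
    ∃ u ∈ Z, ∃ v ∈ Z', ∃ p : T.Walk u v,
      p.length ≤ ⌈2 * ((d : ℝ) / α') * Real.logb 2 ((n : ℝ) / Z.ncard)⌉₊ +
                 ⌈2 * ((d : ℝ) / α') * Real.logb 2 ((n : ℝ) / Z'.ncard)⌉₊ := by
  classical
  rcases subsingleton_or_nontrivial V with hsub | hnt
  · obtain ⟨u, hu⟩ := hZne
    obtain ⟨v, hv⟩ := hZ'ne
    have huv : u = v := Subsingleton.elim u v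
    subst huv
    exact ⟨u, hu, u, hv, Walk.nil, Nat.zero_le _⟩
  · have hd1 : 1 ≤ d := one_le_d hα0 hT hd
    have : Nonempty V := ⟨hZne.some⟩
    have hV1 : 1 ≤ Nat.card V := Nat.card_pos
    have key : ∀ (S : Set V), S.Nonempty →
        Nat.card V <
          2 * (wball T S ⌈2 * ((d : ℝ) / α') * Real.logb 2 ((n : ℝ) / S.ncard)⌉₊).ncard := by
      intro S hS
      set K := ⌈2 * ((d : ℝ) / α') * Real.logb 2 ((n : ℝ) / S.ncard)⌉₊ with hK
      rcases wball_growth hα0 hT hd hd1 hS K with h | h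
      · exact_mod_cast h
      · have hz1 : 1 ≤ S.ncard := (Set.ncard_pos (toFinite S)).mpr hS
        have hzn : S.ncard ≤ n := by
          have h1 : S.ncard ≤ (univ : Set V).ncard :=
            Set.ncard_le_ncard (subset_univ S) (toFinite _)
          rw [Set.ncard_univ] at h1
          omega
        set x := α' / (d : ℝ) with hxdef
        have hdpos : (0 : ℝ) < d := by exact_mod_cast hd1
        have hx0 : 0 < x := div_pos hα0 hdpos
        have hx1 : x ≤ 1 := by
          rw [hxdef, div_le_one hdpos]
          have : (1 : ℝ) ≤ d := by exact_mod_cast hd1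
          linarith
        have hlog : x / 2 ≤ Real.log (1 + x) := by
          have h0 : (0 : ℝ) < 1 + x := by linarith
          have h3 := Real.one_sub_inv_le_log_of_pos h0
          have h4 : 1 - (1 + x)⁻¹ = x / (1 + x) := by field_simp; ring
          rw [h4] at h3
          have h5 : x / 2 ≤ x / (1 + x) := by
            rw [div_le_div_iff₀ (by norm_num) h0]
            nlinarith
          linarith
        have hnz : (0 : ℝ) < (n : ℝ) / S.ncard := by
          have hn1 : (1 : ℝ) ≤ (n : ℝ) := by exact_mod_cast hz1.trans hzn
          have hz0 : (0 : ℝ) < (S.ncard : ℝ) := by exact_mod_cast hz1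
          positivity
        have hge1 : (1 : ℝ) ≤ (n : ℝ) / S.ncard := by
          rw [le_div_iff₀ (by exact_mod_cast hz1)]
          simpa using (Nat.cast_le (α := ℝ)).mpr hzn
        have hL0 : 0 ≤ Real.logb 2 ((n : ℝ) / S.ncard) :=
          Real.logb_nonneg one_lt_two hge1
        have hKge : 2 * ((d : ℝ) / α') * Real.logb 2 ((n : ℝ) / S.ncard) ≤ K := Nat.le_ceil _
        have hln : Real.log ((n : ℝ) / S.ncard) ≤ K * Real.log (1 + x) := by
          have hlb : Real.log ((n : ℝ) / S.ncard) =
              Real.logb 2 ((n : ℝ) / S.ncard) * Real.log 2 := by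
            rw [Real.logb]
            field_simp
          have hlog2 : Real.log 2 ≤ 1 := by
            have := Real.log_two_lt_d9
            linarith
          have h6 : Real.log ((n : ℝ) / S.ncard) ≤ Real.logb 2 ((n : ℝ) / S.ncard) := by
            rw [hlb]
            nlinarith
          have h7 : (K : ℝ) * (x / 2) ≤ (K : ℝ) * Real.log (1 + x) :=
            mul_le_mul_of_nonneg_left hlog (Nat.cast_nonneg K)
          have h8 : Real.logb 2 ((n : ℝ) / S.ncard) ≤ (K : ℝ) * (x / 2) := by
            have hax : (d : ℝ) / α' * x = 1 := by
              field_simp [hxdef]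
              rw [hxdef]
              field_simp
            nlinarith [hKge, hx0.le]
          linarith
        have hpow : (n : ℝ) / S.ncard ≤ (1 + x) ^ K := by
          have h0 : (0 : ℝ) < 1 + x := by linarith
          have h9 : Real.log ((1 + x) ^ K) = (K : ℝ) * Real.log (1 + x) := by
            rw [Real.log_pow]
          rw [← Real.log_le_log_iff hnz (pow_pos h0 K), h9]
          exact hln
        have hzpos : (0 : ℝ) < (S.ncard : ℝ) := by exact_mod_cast hz1
        have hfin : (n : ℝ) ≤ (1 + x) ^ K * S.ncard := by
          rw [div_le_iff₀ hzpos] at hpow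
          linarith
        have hnV : (Nat.card V : ℝ) ≤ (n : ℝ) := by exact_mod_cast hn
        have hV1' : (1 : ℝ) ≤ (Nat.card V : ℝ) := by exact_mod_cast hV1
        have : (Nat.card V : ℝ) < 2 * ((wball T S K).ncard : ℝ) := by
          rw [hxdef] at h
          linarith
        exact_mod_cast this
    have h1 := key Z hZne
    have h2 := key Z' hZ'ne
    set Kz := ⌈2 * ((d : ℝ) / α') * Real.logb 2 ((n : ℝ) / Z.ncard)⌉₊ with hKz
    set Kz' := ⌈2 * ((d : ℝ) / α') * Real.logb 2 ((n : ℝ) / Z'.ncard)⌉₊ with hKz'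
    have hinter : (wball T Z Kz ∩ wball T Z' Kz').Nonempty := by
      by_contra hcon
      rw [Set.not_nonempty_iff_eq_empty] at hcon
      have h3 := Set.ncard_inter_add_ncard_union (wball T Z Kz) (wball T Z' Kz')
        (toFinite _) (toFinite _)
      have h4 : (wball T Z Kz ∪ wball T Z' Kz').ncard ≤ Nat.card V := by
        have := Set.ncard_le_ncard (subset_univ (wball T Z Kz ∪ wball T Z' Kz')) (toFinite _)
        rwa [Set.ncard_univ] at this
      rw [hcon, Set.ncard_empty] at h3
      omega
    obtain ⟨w, ⟨u, hu, p, hp⟩, ⟨v, hv, q, hq⟩⟩ := hinter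
    refine ⟨u, hu, v, hv, p.append q.reverse, ?_⟩
    rw [Walk.length_append, Walk.length_reverse]
    omega

set_option maxHeartbeats 1000000 in
lemma part1 (V : Type) [Fintype V] (T : SimpleGraph V) (α' : ℝ) (n d : ℕ)
    (hα0 : 0 < α') (hα1 : α' < 1) (hT : IsExpander T α')
    (hn : Nat.card V ≤ n) (hd : DegLE T d)
    (Z Z' : Set V) (hZne : Z.Nonempty) (hZ'ne : Z'.Nonempty) :
    ∃ u ∈ Z, ∃ v ∈ Z', ∃ p : T.Walk u v, p.IsPath ∧
      (p.length : ℝ) ≤ 8 * d / α' * (Real.logb 2 ((n : ℝ) / Nat.card ↥Z) +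
        Real.logb 2 ((n : ℝ) / Nat.card ↥Z')) := by
  classical
  simp only [Nat.card_coe_set_eq]
  set L := Real.logb 2 ((n : ℝ) / Z.ncard) with hL
  set L' := Real.logb 2 ((n : ℝ) / Z'.ncard) with hL'
  have hz1 : 1 ≤ Z.ncard := (Set.ncard_pos (toFinite Z)).mpr hZne
  have hz'1 : 1 ≤ Z'.ncard := (Set.ncard_pos (toFinite Z')).mpr hZ'ne
  have hzn : Z.ncard ≤ n := by
    have h1 := Set.ncard_le_ncard (subset_univ Z) (toFinite _)
    rw [Set.ncard_univ] at h1
    omega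
  have hz'n : Z'.ncard ≤ n := by
    have h1 := Set.ncard_le_ncard (subset_univ Z') (toFinite _)
    rw [Set.ncard_univ] at h1
    omega
  have hzpos : (0 : ℝ) < (Z.ncard : ℝ) := by exact_mod_cast hz1
  have hz'pos : (0 : ℝ) < (Z'.ncard : ℝ) := by exact_mod_cast hz'1
  have hL0 : 0 ≤ L := Real.logb_nonneg one_lt_two
    (by rw [le_div_iff₀ hzpos]; simpa using (Nat.cast_le (α := ℝ)).mpr hzn)
  have hL'0 : 0 ≤ L' := Real.logb_nonneg one_lt_two
    (by rw [le_div_iff₀ hz'pos]; simpa using (Nat.cast_le (α := ℝ)).mpr hz'n)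
  rcases subsingleton_or_nontrivial V with hsub | hnt
  · obtain ⟨u, hu⟩ := hZne
    obtain ⟨v, hv⟩ := hZ'ne
    have huv : u = v := Subsingleton.elim u v
    subst huv
    refine ⟨u, hu, u, hv, Walk.nil, Walk.IsPath.nil, ?_⟩
    simp only [Walk.length_nil, Nat.cast_zero]
    have h8 : (0 : ℝ) ≤ 8 * d / α' := by positivity
    exact mul_nonneg h8 (by linarith)
  by_cases hcase : (Z.ncard : ℝ) ≤ n / 2 ∨ (Z'.ncard : ℝ) ≤ n / 2
  · -- main case: use the ball-growth argument
    have hd1 : 1 ≤ d := one_le_d hα0 hT hd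
    obtain ⟨u, hu, v, hv, p, hlen⟩ := core V T α' n d hα0 hα1 hT hn hd Z Z' hZne hZ'ne
    refine ⟨u, hu, v, hv, p.bypass, p.bypass_isPath, ?_⟩
    have hble : (p.bypass.length : ℝ) ≤
        ((⌈2 * ((d : ℝ) / α') * L⌉₊ + ⌈2 * ((d : ℝ) / α') * L'⌉₊ : ℕ) : ℝ) := by
      exact_mod_cast (Walk.length_bypass_le p).trans hlen
    push_cast at hble
    have ha0 : (0 : ℝ) ≤ (d : ℝ) / α' := by positivity
    have hc1 : (⌈2 * ((d : ℝ) / α') * L⌉₊ : ℝ) < 2 * ((d : ℝ) / α') * L + 1 :=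
      Nat.ceil_lt_add_one (mul_nonneg (mul_nonneg (by norm_num) ha0) hL0)
    have hc2 : (⌈2 * ((d : ℝ) / α') * L'⌉₊ : ℝ) < 2 * ((d : ℝ) / α') * L' + 1 :=
      Nat.ceil_lt_add_one (mul_nonneg (mul_nonneg (by norm_num) ha0) hL'0)
    have ha1 : (1 : ℝ) ≤ (d : ℝ) / α' := by
      rw [le_div_iff₀ hα0]
      have : (1 : ℝ) ≤ (d : ℝ) := by exact_mod_cast hd1
      linarith
    have haL : 1 ≤ (d : ℝ) / α' * L ∨ 1 ≤ (d : ℝ) / α' * L' := by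
      rcases hcase with hsm | hsm
      · left
        have h2 : (2 : ℝ) ≤ (n : ℝ) / Z.ncard := by
          rw [le_div_iff₀ hzpos]
          linarith
        have hL1 : (1 : ℝ) ≤ L := by
          have h3 := Real.logb_le_logb_of_le one_lt_two (by norm_num : (0:ℝ) < 2) h2
          rwa [Real.logb_self_eq_one one_lt_two] at h3
        calc (1 : ℝ) = 1 * 1 := by ring
          _ ≤ (d : ℝ) / α' * L := mul_le_mul ha1 hL1 zero_le_one ha0
      · right
        have h2 : (2 : ℝ) ≤ (n : ℝ) / Z'.ncard := by
          rw [le_div_iff₀ hz'pos]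
          linarith
        have hL1 : (1 : ℝ) ≤ L' := by
          have h3 := Real.logb_le_logb_of_le one_lt_two (by norm_num : (0:ℝ) < 2) h2
          rwa [Real.logb_self_eq_one one_lt_two] at h3
        calc (1 : ℝ) = 1 * 1 := by ring
          _ ≤ (d : ℝ) / α' * L' := mul_le_mul ha1 hL1 zero_le_one ha0
    have hrw : 8 * (d : ℝ) / α' * (L + L') =
        8 * ((d : ℝ) / α') * L + 8 * ((d : ℝ) / α') * L' := by ring
    rw [hrw]
    have hdL0 : 0 ≤ (d : ℝ) / α' * L := mul_nonneg ha0 hL0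
    have hdL'0 : 0 ≤ (d : ℝ) / α' * L' := mul_nonneg ha0 hL'0
    rcases haL with h | h <;> linarith [hble, hc1, hc2, hdL0, hdL'0]
  · push_neg at hcase
    obtain ⟨hbig, hbig'⟩ := hcase
    have hVn : (Nat.card V : ℝ) ≤ (n : ℝ) := by exact_mod_cast hn
    have hlt : Nat.card V < Z.ncard + Z'.ncard := by
      have : (Nat.card V : ℝ) < (Z.ncard : ℝ) + (Z'.ncard : ℝ) := by linarith
      exact_mod_cast this
    have hinter : (Z ∩ Z').Nonempty := by
      by_contra hcon
      rw [Set.not_nonempty_iff_eq_empty] at hcon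
      have h3 := Set.ncard_inter_add_ncard_union Z Z' (toFinite _) (toFinite _)
      have h4 : (Z ∪ Z').ncard ≤ Nat.card V := by
        have := Set.ncard_le_ncard (subset_univ (Z ∪ Z')) (toFinite _)
        rwa [Set.ncard_univ] at this
      rw [hcon, Set.ncard_empty] at h3
      omega
    obtain ⟨u, huZ, huZ'⟩ := hinter
    refine ⟨u, huZ, u, huZ', Walk.nil, Walk.IsPath.nil, ?_⟩
    simp only [Walk.length_nil, Nat.cast_zero]
    have h8 : (0 : ℝ) ≤ 8 * d / α' := by positivity
    exact mul_nonneg h8 (by linarith)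

end Aux

/-- Short paths in expanders: if `T` is an `α'`-expander with at most `n` vertices and
maximum degree at most `d`, and `Z, Z'` are non-empty vertex sets of sizes `z, z'`, then
some path of length at most `(8d/α')·(log₂(n/z) + log₂(n/z'))` connects `Z` to `Z'`.
In particular any two vertices are joined by a path of length at most `16·d·log₂ n/α'`. -/
theorem short_paths_in_expanders (V : Type) [Fintype V] (T : SimpleGraph V)
    (α' : ℝ) (n d z z' : ℕ)
    (hα0 : 0 < α') (hα1 : α' < 1) (hT : IsExpander T α')
    (hn : Nat.card V ≤ n) (hd : DegLE T d)
    (Z Z' : Set V) (hZne : Z.Nonempty) (hZ'ne : Z'.Nonempty)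
    (hz : Nat.card ↥Z = z) (hz' : Nat.card ↥Z' = z') :
    (∃ u ∈ Z, ∃ v ∈ Z', ∃ p : T.Walk u v, p.IsPath ∧
        (p.length : ℝ) ≤
          8 * d / α' * (Real.logb 2 ((n : ℝ) / z) + Real.logb 2 ((n : ℝ) / z'))) ∧
    (∀ v v' : V, ∃ p : T.Walk v v', p.IsPath ∧
        (p.length : ℝ) ≤ 16 * d * Real.logb 2 n / α') := by
  constructor
  · subst hz
    subst hz'
    exact part1 V T α' n d hα0 hα1 hT hn hd Z Z' hZne hZ'ne
  · intro v v'
    obtain ⟨u, hu, w, hw, p, hp, hlen⟩ :=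
      part1 V T α' n d hα0 hα1 hT hn hd {v} {v'} ⟨v, rfl⟩ ⟨v', rfl⟩
    have hu' : u = v := hu
    have hw' : w = v' := hw
    subst hu'
    subst hw'
    refine ⟨p, hp, ?_⟩
    simp only [Nat.card_coe_set_eq, Set.ncard_singleton, Nat.cast_one, div_one] at hlen
    have heq : 8 * (d : ℝ) / α' * (Real.logb 2 (n : ℝ) + Real.logb 2 (n : ℝ)) =
        16 * d * Real.logb 2 n / α' := by ring
    linarith [hlen, heq.le]
end

section
/- There is an efficient algorithm (in particular, the following existence claim holds): given a connected graph Ĝ with maximum vertex degree at most d, an integer r ≥ 1, and a subset R ⊆ V(Ĝ) with |R| ≥ r, there exist r pairwise disjoint vertex subsets V₁, …, V_r of V(Ĝ) such that for each i ∈ {1,…,r} the induced subgraph Ĝ[Vᵢ] is connected and |Vᵢ ∩ R| ≥ ⌊|R|/(d·r)⌋. -/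
set_option linter.unusedSectionVars false
set_option maxHeartbeats 1000000
set_option linter.deprecated false


open SimpleGraph

section Aux
variable {V : Type} [Fintype V] {G : SimpleGraph V}


/-- Walk-based connectivity of a vertex subset. -/
def WConn (G : SimpleGraph V) (s : Set V) : Prop :=
  s.Nonempty ∧ ∀ u ∈ s, ∀ v ∈ s, ∃ p : G.Walk u v, ∀ x ∈ p.support, x ∈ s

lemma wconn_iff {s : Set V} : (G.induce s).Connected ↔ WConn G s := by
  rw [connected_induce_iff, Subgraph.connected_iff_forall_exists_walk_subgraph]
  constructor
  · rintro ⟨hne, h⟩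
    refine ⟨by simpa using hne, fun u hu v hv => ?_⟩
    obtain ⟨p, hp⟩ := h (by simpa using hu) (by simpa using hv)
    refine ⟨p, fun x hx => ?_⟩
    have := hp.1 (by simpa [Walk.mem_verts_toSubgraph] using hx)
    simpa using this
  · rintro ⟨hne, h⟩
    refine ⟨by simpa using hne, ?_⟩
    intro u v hu hv
    obtain ⟨p, hp⟩ := h u (by simpa using hu) v (by simpa using hv)
    refine ⟨p, le_trans p.toSubgraph_le_induce_support ?_⟩
    exact Subgraph.induce_mono_right (fun x hx => hp x hx)

lemma wconn_singleton (v : V) : WConn G {v} := by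
  refine ⟨⟨v, rfl⟩, fun u hu w hw => ?_⟩
  rcases hu with rfl
  rcases hw with rfl
  exact ⟨Walk.nil, by simp⟩

/-- The set of vertices reachable from `x` by a walk staying inside `T`. -/
def comp (G : SimpleGraph V) (T : Set V) (x : V) : Set V :=
  {y | ∃ p : G.Walk x y, ∀ z ∈ p.support, z ∈ T}

lemma comp_subset {T : Set V} {x : V} : comp G T x ⊆ T := by
  rintro y ⟨p, hp⟩
  exact hp y p.end_mem_support

lemma mem_comp_self {T : Set V} {x : V} (hx : x ∈ T) : x ∈ comp G T x :=
  ⟨Walk.nil, by simpa using hx⟩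

lemma comp_eq_of_mem {T : Set V} {x y : V} (hy : y ∈ comp G T x) :
    comp G T x = comp G T y := by
  obtain ⟨p, hp⟩ := hy
  ext z
  constructor
  · rintro ⟨q, hq⟩
    refine ⟨p.reverse.append q, fun w hw => ?_⟩
    rw [Walk.mem_support_append_iff] at hw
    rcases hw with hw | hw
    · exact hp w (by simpa [Walk.support_reverse] using hw)
    · exact hq w hw
  · rintro ⟨q, hq⟩
    refine ⟨p.append q, fun w hw => ?_⟩
    rw [Walk.mem_support_append_iff] at hw
    rcases hw with hw | hw
    · exact hp w hw
    · exact hq w hw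

lemma adj_mem_comp {T : Set V} {x y : V} (hx : x ∈ T) (hy : y ∈ T) (h : G.Adj x y) :
    y ∈ comp G T x := by
  refine ⟨Walk.cons h Walk.nil, fun z hz => ?_⟩
  simp only [Walk.support_cons, Walk.support_nil, List.mem_cons, List.mem_singleton] at hz
  rcases hz with rfl | rfl | h'
  · exact hx
  · exact hy
  · exact absurd h' (List.not_mem_nil)

lemma wconn_comp {T : Set V} {x : V} (hx : x ∈ T) : WConn G (comp G T x) := by
  classical
  refine ⟨⟨x, mem_comp_self hx⟩, fun u hu v hv => ?_⟩
  obtain ⟨p, hp⟩ := hu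
  obtain ⟨q, hq⟩ := hv
  refine ⟨p.reverse.append q, fun z hz => ?_⟩
  rw [Walk.mem_support_append_iff] at hz
  rcases hz with hz | hz
  · have hz' : z ∈ p.support := by simpa [Walk.support_reverse] using hz
    exact ⟨p.takeUntil z hz', fun w hw => hp w (p.support_takeUntil_subset hz' hw)⟩
  · exact ⟨q.takeUntil z hz, fun w hw => hq w (q.support_takeUntil_subset hz hw)⟩

/-- From any vertex of `H \ {ρ}`, walking to `ρ` inside `H`, one finds a neighbour of `ρ`
in the same component of `H \ {ρ}`. -/
lemma reach_comp_nbr {H : Set V} {ρ : V} :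
    ∀ {u v : V} (w : G.Walk u v), v = ρ → (∀ z ∈ w.support, z ∈ H) → u ∈ H \ {ρ} →
    ∃ n, G.Adj ρ n ∧ n ∈ comp G (H \ {ρ}) u := by
  intro u v w
  induction w with
  | nil =>
    rintro rfl _ hu
    exact absurd rfl hu.2
  | @cons a b c h q ih =>
    intro hv hsupp hu
    by_cases hb : b = ρ
    · subst hb
      exact ⟨a, h.symm, mem_comp_self hu⟩
    · have hbH : b ∈ H := hsupp b (by simp [Walk.support_cons])
      have hbT : b ∈ H \ {ρ} := ⟨hbH, hb⟩
      obtain ⟨n, hn1, hn2⟩ := ih hv (fun z hz => hsupp z (by simp [Walk.support_cons, hz])) hbT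
      refine ⟨n, hn1, ?_⟩
      have hbc : b ∈ comp G (H \ {ρ}) a := adj_mem_comp hu hbT h
      rw [comp_eq_of_mem hbc]
      exact hn2

/-- From a vertex outside the component `comp G (H \ {ρ}) x` (which contains `A`),
one can walk to `ρ` avoiding `A`. -/
lemma reach_avoid {H A : Set V} {ρ x : V} (hA : A ⊆ comp G (H \ {ρ}) x) (hρH : ρ ∈ H)
    (hρA : ρ ∉ A) :
    ∀ {u v : V} (w : G.Walk u v), v = ρ → (∀ z ∈ w.support, z ∈ H) → u ∈ H \ {ρ} →
    u ∉ comp G (H \ {ρ}) x →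
    ∃ w' : G.Walk u ρ, ∀ z ∈ w'.support, z ∈ H \ A := by
  intro u v w
  induction w with
  | nil =>
    rintro rfl _ hu
    exact absurd rfl hu.2
  | @cons a b c h q ih =>
    intro hv hsupp hu huC
    have haA : a ∉ A := fun hh => huC (hA hh)
    by_cases hb : b = ρ
    · subst hb
      refine ⟨Walk.cons h Walk.nil, fun z hz => ?_⟩
      simp only [Walk.support_cons, Walk.support_nil, List.mem_cons, List.mem_singleton] at hz
      rcases hz with rfl | rfl | h'
      · exact ⟨hu.1, haA⟩
      · exact ⟨hρH, hρA⟩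
      · exact absurd h' (List.not_mem_nil)
    · have hbH : b ∈ H := hsupp b (by simp [Walk.support_cons])
      have hbT : b ∈ H \ {ρ} := ⟨hbH, hb⟩
      have hbc : b ∈ comp G (H \ {ρ}) a := adj_mem_comp hu hbT h
      have hbC : b ∉ comp G (H \ {ρ}) x := by
        intro hbx
        apply huC
        rw [comp_eq_of_mem hbx, ← comp_eq_of_mem hbc]
        exact mem_comp_self hu
      obtain ⟨w', hw'⟩ := ih hv (fun z hz => hsupp z (by simp [Walk.support_cons, hz])) hbT hbC
      refine ⟨Walk.cons h w', fun z hz => ?_⟩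
      simp only [Walk.support_cons, List.mem_cons] at hz
      rcases hz with rfl | hz
      · exact ⟨hu.1, haA⟩
      · exact hw' z hz

end Aux

section Main
variable {V : Type} [Fintype V] {G : SimpleGraph V}

/-- Key extraction lemma: from a connected set `H` we can split off a connected piece `A`
containing between `k` and `d*(k-1)+1` vertices of `S`, leaving `H \ A` connected
(unless `A = H`). -/
lemma extract_piece (d k : ℕ) (hd : DegLE G d) (hk : 1 ≤ k) :
    ∀ (n : ℕ) (H : Set V), H.ncard ≤ n → ∀ ρ ∈ H, WConn G H → ∀ S : Set V, S ⊆ H →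
      k ≤ S.ncard →
    ∃ A : Set V, A ⊆ H ∧ WConn G A ∧ k ≤ (A ∩ S).ncard ∧ (A ∩ S).ncard ≤ d * (k - 1) + 1 ∧
      (A = H ∨ (ρ ∉ A ∧ WConn G (H \ A))) := by
  classical
  intro n
  induction n with
  | zero =>
    intro H hH ρ hρ _
    exfalso
    have h0 : H.ncard = 0 := le_antisymm hH (Nat.zero_le _)
    rw [Set.ncard_eq_zero H.toFinite] at h0
    simp [h0] at hρ
  | succ n ih =>
    intro H hHcard ρ hρ hHconn S hSH hSk
    set T : Set V := H \ {ρ} with hT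
    have hnbr : ∀ x ∈ T, ∃ m, G.Adj ρ m ∧ m ∈ comp G T x := by
      intro x hx
      obtain ⟨w, hw⟩ := hHconn.2 x hx.1 ρ hρ
      exact reach_comp_nbr w rfl hw hx
    by_cases hheavy : ∃ x ∈ T, k ≤ (comp G T x ∩ S).ncard
    · -- heavy component: recurse into it
      obtain ⟨x, hxT, hxk⟩ := hheavy
      have hCsubT : comp G T x ⊆ T := comp_subset
      have hρnC : ρ ∉ comp G T x := fun h => (hCsubT h).2 rfl
      have hCss : comp G T x ⊂ H :=
        ⟨hCsubT.trans Set.diff_subset, fun h => hρnC (h hρ)⟩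
      have hCcard : (comp G T x).ncard ≤ n := by
        have := Set.ncard_lt_ncard hCss H.toFinite
        omega
      obtain ⟨ρ', hρ'adj, hρ'C⟩ := hnbr x hxT
      obtain ⟨A, hA1, hA2, hA3, hA4, hA5⟩ :=
        ih (comp G T x) hCcard ρ' hρ'C (wconn_comp hxT) (comp G T x ∩ S)
          Set.inter_subset_left hxk
      have hAS : A ∩ (comp G T x ∩ S) = A ∩ S := by
        rw [← Set.inter_assoc, Set.inter_eq_self_of_subset_left hA1]
      have hρnA : ρ ∉ A := fun h => hρnC (hA1 h)
      have hAne : ∀ u, u ∈ comp G T x → u ∉ A → A ≠ comp G T x := by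
        intro u hu hu' h
        exact hu' (h.symm ▸ hu)
      have hkey : ∀ u ∈ H \ A, ∃ w : G.Walk u ρ, ∀ z ∈ w.support, z ∈ H \ A := by
        intro u hu
        by_cases huρ : u = ρ
        · subst huρ
          exact ⟨Walk.nil, by simpa using hu⟩
        · by_cases huC : u ∈ comp G T x
          · rcases hA5 with h | ⟨hρ'A, hconn'⟩
            · exact absurd h (hAne u huC hu.2)
            · obtain ⟨q, hq⟩ := hconn'.2 u ⟨huC, hu.2⟩ ρ' ⟨hρ'C, hρ'A⟩
              refine ⟨q.append (Walk.cons hρ'adj.symm Walk.nil), fun z hz => ?_⟩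
              rw [Walk.mem_support_append_iff] at hz
              rcases hz with hz | hz
              · have := hq z hz
                exact ⟨(hCsubT this.1).1, this.2⟩
              · simp only [Walk.support_cons, Walk.support_nil, List.mem_cons,
                  List.mem_singleton] at hz
                rcases hz with rfl | rfl | h'
                · exact ⟨(hCsubT hρ'C).1, hρ'A⟩
                · exact ⟨hρ, hρnA⟩
                · exact absurd h' (List.not_mem_nil)
          · obtain ⟨w, hw⟩ := hHconn.2 u hu.1 ρ hρ
            exact reach_avoid hA1 hρ hρnA w rfl hw ⟨hu.1, huρ⟩ huC
      refine ⟨A, hA1.trans (hCsubT.trans Set.diff_subset), hA2,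
        by rwa [hAS] at hA3, by rwa [hAS] at hA4, Or.inr ⟨hρnA, ?_⟩⟩
      refine ⟨⟨ρ, hρ, hρnA⟩, fun u hu v hv => ?_⟩
      obtain ⟨wu, hwu⟩ := hkey u hu
      obtain ⟨wv, hwv⟩ := hkey v hv
      refine ⟨wu.append wv.reverse, fun z hz => ?_⟩
      rw [Walk.mem_support_append_iff] at hz
      rcases hz with hz | hz
      · exact hwu z hz
      · exact hwv z (by simpa [Walk.support_reverse] using hz)
    · -- all components light: |S| is small, take A = H
      push_neg at hheavy
      have hlight : ∀ x ∈ T, (comp G T x ∩ S).ncard ≤ k - 1 := by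
        intro x hx
        have := hheavy x hx
        omega
      have hSL : (S \ {ρ}) ⊆ T := Set.diff_subset_diff_left hSH
      set F : Finset V := (S \ {ρ}).toFinite.toFinset with hF
      have hmemF : ∀ {s}, s ∈ F ↔ s ∈ S \ ({ρ} : Set V) := fun {s} =>
        (S \ {ρ}).toFinite.mem_toFinset
      set f : V → V := fun s => if h : s ∈ T then (hnbr s h).choose else s with hf
      have hfprop : ∀ s (h : s ∈ T), G.Adj ρ (f s) ∧ f s ∈ comp G T s := by
        intro s h
        rw [hf]
        simp only [dif_pos h]
        exact (hnbr s h).choose_spec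
      have hcard1 : F.card ≤ (k - 1) * (F.image f).card := by
        apply Finset.card_le_mul_card_image
        intro a ha
        obtain ⟨s₀, hs₀F, hfs₀⟩ := Finset.mem_image.mp ha
        have hs₀T : s₀ ∈ T := hSL (hmemF.mp hs₀F)
        have hsub : {s ∈ F | f s = a} ⊆ (comp G T s₀ ∩ S).toFinite.toFinset := by
          intro s hs
          rw [Finset.mem_filter] at hs
          obtain ⟨hsF, hfs⟩ := hs
          have hsT : s ∈ T := hSL (hmemF.mp hsF)
          have h1 : a ∈ comp G T s := hfs ▸ (hfprop s hsT).2
          have h2 : a ∈ comp G T s₀ := hfs₀ ▸ (hfprop s₀ hs₀T).2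
          have : comp G T s = comp G T s₀ := by
            rw [comp_eq_of_mem h1, comp_eq_of_mem h2]
          rw [Set.Finite.mem_toFinset]
          exact ⟨this ▸ mem_comp_self hsT, (hmemF.mp hsF).1⟩
        calc {s ∈ F | f s = a}.card ≤ _ := Finset.card_le_card hsub
          _ = (comp G T s₀ ∩ S).ncard := (Set.ncard_eq_toFinset_card _ _).symm
          _ ≤ k - 1 := hlight s₀ hs₀T
      have hcard2 : (F.image f).card ≤ d := by
        have hsub : F.image f ⊆ {w | G.Adj ρ w}.toFinite.toFinset := by
          intro a ha
          obtain ⟨s₀, hs₀F, hfs₀⟩ := Finset.mem_image.mp ha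
          rw [Set.Finite.mem_toFinset]
          exact hfs₀ ▸ (hfprop s₀ (hSL (hmemF.mp hs₀F))).1
        calc (F.image f).card ≤ _ := Finset.card_le_card hsub
          _ = ({w | G.Adj ρ w} : Set V).ncard := (Set.ncard_eq_toFinset_card _ _).symm
          _ = Nat.card ↥{w : V | G.Adj ρ w} := (Nat.card_coe_set_eq _).symm
          _ ≤ d := hd ρ
      have hSsmall : S.ncard ≤ d * (k - 1) + 1 := by
        have h1 : (S \ {ρ}).ncard = F.card := Set.ncard_eq_toFinset_card _ _
        have h2 : S.ncard ≤ (S \ {ρ}).ncard + 1 := by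
          have hsub : S ⊆ (S \ {ρ}) ∪ {ρ} := by
            intro s hs
            by_cases h : s = ρ
            · exact Or.inr h
            · exact Or.inl ⟨hs, h⟩
          calc S.ncard ≤ ((S \ {ρ}) ∪ {ρ}).ncard :=
                Set.ncard_le_ncard hsub (Set.toFinite _)
            _ ≤ (S \ {ρ}).ncard + ({ρ} : Set V).ncard := Set.ncard_union_le _ _
            _ = (S \ {ρ}).ncard + 1 := by rw [Set.ncard_singleton]
        have h3 : F.card ≤ (k - 1) * d :=
          hcard1.trans (Nat.mul_le_mul_left _ hcard2)
        have := Nat.mul_comm (k - 1) d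
        omega
      refine ⟨H, Set.Subset.rfl, hHconn, ?_, ?_, Or.inl rfl⟩
      · rwa [Set.inter_eq_self_of_subset_right hSH]
      · rwa [Set.inter_eq_self_of_subset_right hSH]

end Main

section Pieces
variable {V : Type} [Fintype V] {G : SimpleGraph V}

lemma pieces (d k : ℕ) (hd : DegLE G d) (hk : 1 ≤ k) :
    ∀ (r : ℕ) (H S : Set V), WConn G H → S ⊆ H →
      r * (d * (k - 1) + 1) + k ≤ S.ncard + (d * (k - 1) + 1) →
    ∃ Vs : Fin r → Set V, (∀ i, Vs i ⊆ H) ∧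
      (∀ i j, i ≠ j → Disjoint (Vs i) (Vs j)) ∧
      (∀ i, WConn G (Vs i)) ∧ (∀ i, k ≤ (Vs i ∩ S).ncard) := by
  classical
  intro r
  induction r with
  | zero =>
    intro H S _ _ _
    exact ⟨fun i => i.elim0, fun i => i.elim0, fun i => i.elim0,
      fun i => i.elim0, fun i => i.elim0⟩
  | succ r ihr =>
    intro H S hH hS hcard
    set B : ℕ := d * (k - 1) + 1 with hB
    have hmul : (r + 1) * B = r * B + B := Nat.succ_mul r B
    have hSk : k ≤ S.ncard := by
      have h := hcard
      rw [hmul] at h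
      omega
    obtain ⟨ρ, hρ⟩ := hH.1
    obtain ⟨A, hA1, hA2, hA3, hA4, hA5⟩ :=
      extract_piece d k hd hk H.ncard H le_rfl ρ hρ hH S hS hSk
    rcases Nat.eq_zero_or_pos r with rfl | hrpos
    · refine ⟨fun _ => A, fun _ => hA1, fun i j hij => absurd (by omega : (i:ℕ) = (j:ℕ)) (fun h => hij (Fin.ext h)),
        fun _ => hA2, fun _ => hA3⟩
    · -- r ≥ 1 : the rest is still big, recurse
      have hsplit : (S ∩ A).ncard + (S \ A).ncard = S.ncard :=
        Set.ncard_inter_add_ncard_diff_eq_ncard S A (Set.toFinite S)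
      have hSA : (S ∩ A).ncard ≤ B := by
        rw [Set.inter_comm]
        exact hA4
      have hrest : r * B + k ≤ (S \ A).ncard + B := by
        rw [hmul] at hcard
        omega
      have hrestk : 1 ≤ (S \ A).ncard := by
        have h1 : 1 * B ≤ r * B := Nat.mul_le_mul_right B hrpos
        omega
      obtain ⟨s₀, hs₀⟩ := Set.nonempty_of_ncard_ne_zero (by omega : (S \ A).ncard ≠ 0)
      have hAH : A ≠ H := by
        intro h
        exact hs₀.2 (h ▸ hS hs₀.1)
      rcases hA5 with h | ⟨hρA, hHA⟩
      · exact absurd h hAH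
      obtain ⟨Vs', h1', h2', h3', h4'⟩ := ihr (H \ A) (S \ A) hHA
        (Set.diff_subset_diff_left hS) hrest
      refine ⟨Fin.cons A Vs', ?_, ?_, ?_, ?_⟩
      · intro i
        induction i using Fin.cases with
        | zero => simpa using hA1
        | succ i => simpa using (h1' i).trans Set.diff_subset
      · intro i j hij
        have hdisj : ∀ j, Disjoint A (Vs' j) := fun j =>
          Set.disjoint_sdiff_right.mono_right (h1' j)
        induction i using Fin.cases with
        | zero =>
          induction j using Fin.cases with
          | zero => exact absurd rfl hij
          | succ j => simpa using hdisj j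
        | succ i =>
          induction j using Fin.cases with
          | zero => simpa using (hdisj i).symm
          | succ j =>
            have : i ≠ j := fun h => hij (by rw [h])
            simpa using h2' i j this
      · intro i
        induction i using Fin.cases with
        | zero => simpa using hA2
        | succ i => simpa using h3' i
      · intro i
        induction i using Fin.cases with
        | zero => simpa using hA3
        | succ i =>
          have h := h4' i
          have hsub : Vs' i ∩ (S \ A) ⊆ Vs' i ∩ S :=
            Set.inter_subset_inter_right _ Set.diff_subset
          have := Set.ncard_le_ncard hsub (Set.toFinite _)
          simpa using le_trans h this

end Pieces


/-- Grouping: given a connected graph `Ĝ` of maximum degree at most `d`, an integer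
`r ≥ 1` and a vertex set `R` with `|R| ≥ r`, there are `r` pairwise disjoint vertex sets,
each inducing a connected subgraph and each containing at least `⌊|R|/(d·r)⌋` vertices
of `R`. -/
theorem grouping_connected_pieces (V : Type) [Fintype V] (G : SimpleGraph V)
    (d r : ℕ) (hG : G.Connected) (hd : DegLE G d) (hr : 1 ≤ r)
    (R : Set V) (hR : r ≤ Nat.card ↥R) :
    ∃ Vs : Fin r → Set V,
      (∀ i j, i ≠ j → Disjoint (Vs i) (Vs j)) ∧
      (∀ i, (G.induce (Vs i)).Connected) ∧
      (∀ i, Nat.card ↥R / (d * r) ≤ Nat.card ↥(Vs i ∩ R)) := by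
  classical
  have hRn : Nat.card ↥R = R.ncard := Nat.card_coe_set_eq R
  set k : ℕ := Nat.card ↥R / (d * r) with hk
  rcases Nat.eq_zero_or_pos k with hk0 | hkpos
  · -- trivial bound: take r distinct vertices of R as singletons
    have hcard : r ≤ (R.toFinite.toFinset).card := by
      rw [← Set.ncard_eq_toFinset_card R R.toFinite, ← hRn]
      exact hR
    obtain ⟨t, hts, htcard⟩ := Finset.exists_subset_card_eq hcard
    let e : t ≃ Fin r := Finset.equivFinOfCardEq htcard
    refine ⟨fun i => {(e.symm i : V)}, ?_, ?_, ?_⟩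
    · intro i j hij
      rw [Set.disjoint_singleton_left]
      intro h
      exact hij (e.symm.injective (Subtype.ext h) ▸ rfl)
    · intro i
      exact wconn_iff.mpr (wconn_singleton _)
    · intro i
      exact le_trans (le_of_eq hk0) (Nat.zero_le _)
  · have hd1 : 1 ≤ d := by
      by_contra h
      have hd0 : d = 0 := by omega
      rw [hk, hd0] at hkpos
      simp at hkpos
    obtain ⟨k', hk'⟩ : ∃ k', k = k' + 1 := ⟨k - 1, by omega⟩
    have hdrk : d * r * k ≤ R.ncard := by
      rw [← hRn, hk]
      calc d * r * k = k * (d * r) := Nat.mul_comm _ _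
        _ ≤ Nat.card ↥R := Nat.div_mul_le_self _ _
    have harith : r * (d * (k - 1) + 1) + k ≤ R.ncard + (d * (k - 1) + 1) := by
      have e1 : k - 1 = k' := by omega
      rw [e1]
      have h1 : r * (d * k' + 1) + (k' + 1) ≤ d * r * (k' + 1) + (d * k' + 1) := by
        have h2 : r ≤ d * r := Nat.le_mul_of_pos_left r hd1
        have h3 : k' ≤ d * k' := Nat.le_mul_of_pos_left k' hd1
        nlinarith
      calc r * (d * k' + 1) + k = r * (d * k' + 1) + (k' + 1) := by rw [hk']
        _ ≤ d * r * (k' + 1) + (d * k' + 1) := h1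
        _ = d * r * k + (d * k' + 1) := by rw [hk']
        _ ≤ R.ncard + (d * k' + 1) := by omega
    have hUconn : WConn G Set.univ := by
      have : Nonempty V := hG.nonempty
      refine ⟨Set.univ_nonempty, fun u _ v _ => ?_⟩
      obtain ⟨w⟩ := hG.preconnected u v
      exact ⟨w, fun x _ => trivial⟩
    obtain ⟨Vs, h1, h2, h3, h4⟩ := pieces d k hd hkpos r Set.univ R hUconn
      (Set.subset_univ R) harith
    refine ⟨Vs, h2, fun i => wconn_iff.mpr (h3 i), fun i => ?_⟩
    rw [Nat.card_coe_set_eq]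
    exact h4 i
end

section
/- Let G be an α-expander with maximum vertex degree at most d, where 0 < α < 1, and let A, B be two disjoint subsets of V(G) of cardinality z each (z ≥ 1). Then there exists a collection of ⌈α·z/d⌉ pairwise vertex-disjoint paths in G, each connecting a vertex of A to a vertex of B. -/
section MengerAux

open SimpleGraph

variable {V : Type} {G : SimpleGraph V}

def MSep (G : SimpleGraph V) (A B S : Set V) : Prop :=
  ∀ a ∈ A, ∀ b ∈ B, ∀ w : G.Walk a b, ∃ s ∈ S, s ∈ w.support

lemma firstHit {u v : V} (w : G.Walk u v) (T : Set V) (hv : v ∈ T) :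
    ∃ z, z ∈ T ∧ ∃ w' : G.Walk u z, w'.support ⊆ w.support ∧ (w.IsPath → w'.IsPath) ∧
      ∀ x ∈ w'.support, x ∈ T → x = z := by
  induction w with
  | @nil a => exact ⟨a, hv, Walk.nil, by simp, fun h => h, by simp⟩
  | @cons a b c h rest ih =>
    by_cases ha : a ∈ T
    · exact ⟨a, ha, Walk.nil, by simp, fun _ => Walk.IsPath.nil, by simp⟩
    · obtain ⟨z, hz, w', hsub, hpath, huniq⟩ := ih hv
      refine ⟨z, hz, Walk.cons h w', ?_, ?_, ?_⟩
      · intro x hx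
        rw [Walk.support_cons] at hx ⊢
        rcases List.mem_cons.mp hx with hx | hx
        · exact hx ▸ List.mem_cons_self
        · exact List.mem_cons_of_mem _ (hsub hx)
      · intro hp
        rw [Walk.cons_isPath_iff] at hp ⊢
        exact ⟨hpath hp.1, fun hmem => hp.2 (hsub hmem)⟩
      · intro x hx hxT
        rw [Walk.support_cons] at hx
        rcases List.mem_cons.mp hx with hx | hx
        · exact absurd (hx ▸ hxT) ha
        · exact huniq x hx hxT

lemma lastHit {u v : V} (w : G.Walk u v) (T : Set V) (hu : u ∈ T) :
    ∃ z, z ∈ T ∧ ∃ w' : G.Walk z v, w'.support ⊆ w.support ∧ (w.IsPath → w'.IsPath) ∧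
      ∀ x ∈ w'.support, x ∈ T → x = z := by
  obtain ⟨z, hz, w', hsub, hpath, huniq⟩ := firstHit w.reverse T (by simpa using hu)
  refine ⟨z, hz, w'.reverse, ?_, ?_, ?_⟩
  · intro x hx
    have : x ∈ w'.support := by simpa using hx
    have := hsub this
    simpa using this
  · intro hp
    rw [Walk.isPath_reverse_iff]
    exact hpath (by rwa [Walk.isPath_reverse_iff])
  · intro x hx hxT
    exact huniq x (by simpa using hx) hxT

/-- From any `A`–`B` walk extract a path whose only `A`-vertex is its start and whose only
`B`-vertex is its end. -/
lemma minimalPath {a b : V} (w : G.Walk a b) (A B : Set V) (ha : a ∈ A) (hb : b ∈ B) :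
    ∃ a', a' ∈ A ∧ ∃ b', b' ∈ B ∧ ∃ p : G.Walk a' b', p.IsPath ∧
      p.support ⊆ w.support ∧ (∀ x ∈ p.support, x ∈ A → x = a') ∧
      (∀ x ∈ p.support, x ∈ B → x = b') := by
  classical
  obtain ⟨a', ha', p1, hsub1, hpath1, huniq1⟩ := lastHit w.bypass A ha
  obtain ⟨b', hb', p2, hsub2, hpath2, huniq2⟩ := firstHit p1 B hb
  refine ⟨a', ha', b', hb', p2, hpath2 (hpath1 w.bypass_isPath), ?_, ?_, ?_⟩
  · exact fun x hx => w.support_bypass_subset (hsub1 (hsub2 hx))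
  · intro x hx hxA
    exact huniq1 x (hsub2 hx) hxA
  · exact huniq2

lemma appendPath {a s b : V} {p : G.Walk a s} {q : G.Walk s b} (hp : p.IsPath) (hq : q.IsPath)
    (h : ∀ x ∈ p.support, x ∈ q.support → x = s) : (p.append q).IsPath := by
  rw [Walk.isPath_def, Walk.support_append, List.nodup_append]
  refine ⟨hp.support_nodup, ?_, ?_⟩
  · have := hq.support_nodup
    rw [q.support_eq_cons] at this
    exact this.of_cons
  · intro x hxp y hxq hxy
    subst hxy
    have hxq' : x ∈ q.support := by
      rw [q.support_eq_cons]; exact List.mem_cons_of_mem _ hxq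
    have hxs : x = s := h x hxp hxq'
    have := hq.support_nodup
    rw [q.support_eq_cons] at this
    exact (List.nodup_cons.mp this).1 (hxs ▸ hxq)

lemma endUnique {u v x : V} [DecidableEq V] {p : G.Walk u v} (hp : p.IsPath)
    (hx : x ∈ p.support) (hxv : x ≠ v) : v ∉ (p.takeUntil x hx).support := by
  intro hvt
  have hspec := p.take_spec hx
  have hnodup : ((p.takeUntil x hx).append (p.dropUntil x hx)).support.Nodup := by
    rw [hspec]; exact hp.support_nodup
  rw [Walk.support_append, List.nodup_append] at hnodup
  have hvd : v ∈ (p.dropUntil x hx).support.tail := by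
    have hv : v ∈ (p.dropUntil x hx).support := Walk.end_mem_support _
    rw [(p.dropUntil x hx).support_eq_cons] at hv
    rcases List.mem_cons.mp hv with h | h
    · exact absurd h.symm hxv
    · exact h
  exact hnodup.2.2 v hvt v hvd rfl

lemma startUnique {u v x : V} [DecidableEq V] {p : G.Walk u v} (hp : p.IsPath)
    (hx : x ∈ p.support) (hxu : x ≠ u) : u ∉ (p.dropUntil x hx).support := by
  intro hud
  have hspec := p.take_spec hx
  have hnodup : ((p.takeUntil x hx).append (p.dropUntil x hx)).support.Nodup := by
    rw [hspec]; exact hp.support_nodup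
  rw [Walk.support_append, List.nodup_append] at hnodup
  have hud' : u ∈ (p.dropUntil x hx).support.tail := by
    rw [(p.dropUntil x hx).support_eq_cons] at hud
    rcases List.mem_cons.mp hud with h | h
    · exact absurd h.symm hxu
    · exact h
  exact hnodup.2.2 u (Walk.start_mem_support _) u hud' rfl

def PathFamily (G : SimpleGraph V) (A B : Set V) (k : ℕ) : Prop :=
  ∃ (u v : Fin k → V) (p : ∀ i, G.Walk (u i) (v i)),
    (∀ i, (p i).IsPath) ∧ (∀ i, u i ∈ A) ∧ (∀ i, v i ∈ B) ∧
    (∀ i j, i ≠ j → ∀ x, x ∈ (p i).support → x ∉ (p j).support)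

lemma mengerAux [Fintype V] : ∀ (n : ℕ) (G : SimpleGraph V) (A B : Set V) (k : ℕ),
    Nat.card G.edgeSet ≤ n → (∀ S : Set V, MSep G A B S → k ≤ S.ncard) →
    PathFamily G A B k := by
  classical
  intro n
  induction n using Nat.strong_induction_on with
  | _ n IH =>
    intro G A B k hn hsep
    rcases Nat.eq_zero_or_pos k with hk0 | hkpos
    · subst hk0
      exact ⟨Fin.elim0, Fin.elim0, fun i => i.elim0, fun i => i.elim0, fun i => i.elim0,
        fun i => i.elim0, fun i => i.elim0⟩
    by_cases hE : ∃ a b, a ∈ A ∧ G.Adj a b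
    · obtain ⟨a₀, b₀, ha₀, hadj⟩ := hE
      have hab : a₀ ≠ b₀ := hadj.ne
      set e : Sym2 V := s(a₀, b₀) with he
      set G' : SimpleGraph V := G.deleteEdges {e} with hG'
      have hG'le : G' ≤ G := G.deleteEdges_le {e}
      have hE' : G'.edgeSet = G.edgeSet \ {e} := G.edgeSet_deleteEdges {e}
      have hlt : Nat.card G'.edgeSet < Nat.card G.edgeSet := by
        rw [Nat.card_coe_set_eq, Nat.card_coe_set_eq, hE']
        exact Set.ncard_lt_ncard (Set.sdiff_singleton_ssubset.mpr (G.mem_edgeSet.mpr hadj))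
          (Set.toFinite _)
      have hm : Nat.card G'.edgeSet < n := lt_of_lt_of_le hlt hn
      -- a walk of G avoiding e transfers to G'
      have htrans : ∀ {x y : V} (w : G.Walk x y), e ∉ w.edges →
          ∃ w' : G'.Walk x y, w'.support = w.support ∧ (w.IsPath → w'.IsPath) := by
        intro x y w hew
        have hcond : ∀ f ∈ w.edges, f ∈ G'.edgeSet := by
          intro f hf
          rw [hE']
          exact ⟨w.edges_subset_edgeSet hf, fun hfe => hew (by rw [Set.mem_singleton_iff] at hfe; rwa [hfe] at hf)⟩
        exact ⟨w.transfer G' hcond, w.support_transfer hcond, fun hp => hp.transfer hcond⟩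
      by_cases hIH' : ∀ S : Set V, MSep G' A B S → k ≤ S.ncard
      · -- delete e and recurse
        obtain ⟨u, v, p, hp, hu, hv, hdisj⟩ := IH _ hm G' A B k le_rfl hIH'
        have hcond : ∀ i, ∀ f ∈ (p i).edges, f ∈ G.edgeSet := by
          intro i f hf
          have : f ∈ G'.edgeSet := (p i).edges_subset_edgeSet hf
          rw [hE'] at this
          exact this.1
        refine ⟨u, v, fun i => (p i).transfer G (hcond i), fun i => (hp i).transfer _,
          hu, hv, ?_⟩
        intro i j hij x hxi hxj
        rw [Walk.support_transfer] at hxi hxj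
        exact hdisj i j hij x hxi hxj
      · push_neg at hIH'
        obtain ⟨S₀, hS₀sep, hS₀lt⟩ := hIH'
        have hS₀fin : S₀.Finite := Set.toFinite _
        have hsepa : MSep G A B (insert a₀ S₀) := by
          intro a ha b hb w
          by_cases hew : e ∈ w.bypass.edges
          · refine ⟨a₀, Set.mem_insert _ _, w.support_bypass_subset ?_⟩
            exact w.bypass.fst_mem_support_of_mem_edges (he ▸ hew)
          · obtain ⟨w', hw's, _⟩ := htrans w.bypass hew
            obtain ⟨s, hs, hsw⟩ := hS₀sep a ha b hb w'
            exact ⟨s, Set.mem_insert_of_mem _ hs, w.support_bypass_subset (hw's ▸ hsw)⟩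
        have hsepb : MSep G A B (insert b₀ S₀) := by
          intro a ha b hb w
          by_cases hew : e ∈ w.bypass.edges
          · refine ⟨b₀, Set.mem_insert _ _, w.support_bypass_subset ?_⟩
            exact w.bypass.snd_mem_support_of_mem_edges (he ▸ hew)
          · obtain ⟨w', hw's, _⟩ := htrans w.bypass hew
            obtain ⟨s, hs, hsw⟩ := hS₀sep a ha b hb w'
            exact ⟨s, Set.mem_insert_of_mem _ hs, w.support_bypass_subset (hw's ▸ hsw)⟩
        have hka : k ≤ (insert a₀ S₀).ncard := hsep _ hsepa
        have hkb : k ≤ (insert b₀ S₀).ncard := hsep _ hsepb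
        have ha₀S : a₀ ∉ S₀ := by
          intro h; rw [Set.insert_eq_self.mpr h] at hka; omega
        have hb₀S : b₀ ∉ S₀ := by
          intro h; rw [Set.insert_eq_self.mpr h] at hkb; omega
        have hScard : S₀.ncard + 1 = k := by
          have h1 := Set.ncard_insert_le a₀ S₀; omega
        have hTacard : (insert a₀ S₀).ncard = k := by
          rw [Set.ncard_insert_of_notMem ha₀S hS₀fin]; omega
        have hTbcard : (insert b₀ S₀).ncard = k := by
          rw [Set.ncard_insert_of_notMem hb₀S hS₀fin]; omega
        have hsepTa : ∀ T : Set V, MSep G' A (insert a₀ S₀) T → k ≤ T.ncard := by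
          intro T hT
          apply hsep
          intro a ha b hb w
          obtain ⟨a', ha', b', hb', P, hPpath, hPsub, hPA, hPB⟩ := minimalPath w A B ha hb
          by_cases heP : e ∈ P.edges
          · have ha₀P : a₀ ∈ P.support := P.fst_mem_support_of_mem_edges (he ▸ heP)
            have ha₀a' : a₀ = a' := hPA a₀ ha₀P ha₀
            obtain ⟨s, hsT, hsw⟩ := hT a' ha' a'
              (by rw [← ha₀a']; exact Set.mem_insert _ _) Walk.nil
            simp only [Walk.support_nil, List.mem_singleton] at hsw
            exact ⟨s, hsT, hPsub (hsw ▸ P.start_mem_support)⟩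
          · obtain ⟨P', hP's, _⟩ := htrans P heP
            obtain ⟨s, hsS, hsP⟩ := hS₀sep a' ha' b' hb' P'
            have hsP' : s ∈ P'.support := hsP
            obtain ⟨tt, htT, htw⟩ := hT a' ha' s (Set.mem_insert_of_mem _ hsS)
              (P'.takeUntil s hsP')
            have htw2 : tt ∈ P'.support := P'.support_takeUntil_subset hsP' htw
            exact ⟨tt, htT, hPsub (hP's ▸ htw2)⟩
        have hsepTb : ∀ T : Set V, MSep G' (insert b₀ S₀) B T → k ≤ T.ncard := by
          intro T hT
          apply hsep
          intro a ha b hb w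
          obtain ⟨a', ha', b', hb', P, hPpath, hPsub, hPA, hPB⟩ := minimalPath w A B ha hb
          by_cases heP : e ∈ P.edges
          · have ha₀P : a₀ ∈ P.support := P.fst_mem_support_of_mem_edges (he ▸ heP)
            have ha₀a' : a₀ = a' := hPA a₀ ha₀P ha₀
            cases P with
            | nil => simp at heP
            | @cons _ c _ h' P'' =>
              have hnotP'' : e ∉ P''.edges := by
                intro hmem
                have hmm : a₀ ∈ P''.support := P''.fst_mem_support_of_mem_edges (he ▸ hmem)
                have h2 := (Walk.cons_isPath_iff h' P'').mp hPpath
                exact h2.2 (ha₀a' ▸ hmm)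
              have hcase : e = s(a', c) ∨ e ∈ P''.edges := by simpa using heP
              rcases hcase with hfst | hmem
              · have hc : c = b₀ := by
                  rw [he] at hfst
                  rcases Sym2.eq_iff.mp hfst with ⟨h1, h2⟩ | ⟨h1, h2⟩
                  · exact h2.symm
                  · exact absurd (ha₀a'.trans h2.symm) hab
                obtain ⟨P₂, hP₂s, _⟩ := htrans P'' hnotP''
                obtain ⟨tt, htT, htw⟩ := hT c (by rw [hc]; exact Set.mem_insert _ _) b' hb' P₂
                refine ⟨tt, htT, hPsub ?_⟩
                rw [Walk.support_cons]
                exact List.mem_cons_of_mem _ (hP₂s ▸ htw)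
              · exact absurd hmem hnotP''
          · obtain ⟨P', hP's, _⟩ := htrans P heP
            obtain ⟨s, hsS, hsP⟩ := hS₀sep a' ha' b' hb' P'
            have hsP' : s ∈ P'.support := hsP
            obtain ⟨tt, htT, htw⟩ := hT s (Set.mem_insert_of_mem _ hsS) b' hb'
              (P'.dropUntil s hsP')
            have htw2 : tt ∈ P'.support := P'.support_dropUntil_subset hsP' htw
            exact ⟨tt, htT, hPsub (hP's ▸ htw2)⟩
        obtain ⟨u, v, p, hp, hu, hv, hdisjA⟩ := IH _ hm G' A (insert a₀ S₀) k le_rfl hsepTa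
        obtain ⟨t, w, q, hq, ht, hw, hdisjB⟩ := IH _ hm G' (insert b₀ S₀) B k le_rfl hsepTb
        choose v' hv' p' hsubA hpathA huniqA using fun i => firstHit (p i) (insert a₀ S₀) (hv i)
        choose t' ht' q' hsubB hpathB huniqB using fun j => lastHit (q j) (insert b₀ S₀) (ht j)
        have hp' : ∀ i, (p' i).IsPath := fun i => hpathA i (hp i)
        have hq' : ∀ j, (q' j).IsPath := fun j => hpathB j (hq j)
        have hdisjA' : ∀ i j, i ≠ j → ∀ x, x ∈ (p' i).support → x ∉ (p' j).support :=
          fun i j hij x hxi hxj => hdisjA i j hij x (hsubA i hxi) (hsubA j hxj)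
        have hdisjB' : ∀ i j, i ≠ j → ∀ x, x ∈ (q' i).support → x ∉ (q' j).support :=
          fun i j hij x hxi hxj => hdisjB i j hij x (hsubB i hxi) (hsubB j hxj)
        have hv'inj : Function.Injective v' := by
          intro i j hij
          by_contra hne
          have h3 : v' j ∈ (p' i).support := by
            rw [← hij]; exact (p' i).end_mem_support
          exact hdisjA' i j hne (v' j) h3 ((p' j).end_mem_support)
        have ht'inj : Function.Injective t' := by
          intro i j hij
          by_contra hne
          have h3 : t' j ∈ (q' i).support := by
            rw [← hij]; exact (q' i).start_mem_support
          exact hdisjB' i j hne (t' j) h3 ((q' j).start_mem_support)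
        have hv'surj : ∀ y ∈ insert a₀ S₀, ∃ i, v' i = y := by
          intro y hy
          have himg : (Finset.univ.image v') ⊆ (insert a₀ S₀).toFinset := by
            intro z hz
            obtain ⟨i, _, rfl⟩ := Finset.mem_image.mp hz
            rw [Set.mem_toFinset]; exact hv' i
          have hcard : (insert a₀ S₀).toFinset.card ≤ (Finset.univ.image v').card := by
            rw [Finset.card_image_of_injective _ hv'inj, Finset.card_univ, Fintype.card_fin,
              ← Set.ncard_eq_toFinset_card', hTacard]
          have heq := Finset.eq_of_subset_of_card_le himg hcard
          have hyi : y ∈ Finset.univ.image v' := by rw [heq]; rwa [Set.mem_toFinset]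
          obtain ⟨i, _, hi⟩ := Finset.mem_image.mp hyi
          exact ⟨i, hi⟩
        have ht'surj : ∀ y ∈ insert b₀ S₀, ∃ j, t' j = y := by
          intro y hy
          have himg : (Finset.univ.image t') ⊆ (insert b₀ S₀).toFinset := by
            intro z hz
            obtain ⟨i, _, rfl⟩ := Finset.mem_image.mp hz
            rw [Set.mem_toFinset]; exact ht' i
          have hcard : (insert b₀ S₀).toFinset.card ≤ (Finset.univ.image t').card := by
            rw [Finset.card_image_of_injective _ ht'inj, Finset.card_univ, Fintype.card_fin,
              ← Set.ncard_eq_toFinset_card', hTbcard]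
          have heq := Finset.eq_of_subset_of_card_le himg hcard
          have hyi : y ∈ Finset.univ.image t' := by rw [heq]; rwa [Set.mem_toFinset]
          obtain ⟨i, _, hi⟩ := Finset.mem_image.mp hyi
          exact ⟨i, hi⟩
        have hpre : ∀ (i : Fin k) (x : V) (hx : x ∈ (p' i).support), x ≠ v' i →
            ∀ y ∈ ((p' i).takeUntil x hx).support, y ∉ S₀ := by
          intro i x hx hxv y hy hyS
          have hy' : y ∈ (p' i).support := (p' i).support_takeUntil_subset hx hy
          have hyv : y = v' i := huniqA i y hy' (Set.mem_insert_of_mem _ hyS)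
          rw [hyv] at hy
          exact endUnique (hp' i) hx hxv hy
        have hsuf : ∀ (j : Fin k) (x : V) (hx : x ∈ (q' j).support), x ≠ t' j →
            ∀ y ∈ ((q' j).dropUntil x hx).support, y ∉ S₀ := by
          intro j x hx hxt y hy hyS
          have hy' : y ∈ (q' j).support := (q' j).support_dropUntil_subset hx hy
          have hyt : y = t' j := huniqB j y hy' (Set.mem_insert_of_mem _ hyS)
          rw [hyt] at hy
          exact startUnique (hq' j) hx hxt hy
        have hcross : ∀ i j x, x ∈ (p' i).support → x ∈ (q' j).support →
            x = v' i ∧ x = t' j ∧ x ∈ S₀ := by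
          intro i j x hxp hxq
          obtain ⟨s, hsS, hsW⟩ := hS₀sep (u i) (hu i) (w j) (hw j)
            (((p' i).takeUntil x hxp).append ((q' j).dropUntil x hxq))
          rw [Walk.mem_support_append_iff] at hsW
          rcases hsW with h | h
          · have hxv : x = v' i := by
              by_contra hxv; exact hpre i x hxp hxv s h hsS
            have hsv : s = v' i :=
              huniqA i s ((p' i).support_takeUntil_subset hxp h) (Set.mem_insert_of_mem _ hsS)
            have hxS : x ∈ S₀ := by rw [hxv, ← hsv]; exact hsS
            have hxt : x = t' j := huniqB j x hxq (Set.mem_insert_of_mem _ hxS)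
            exact ⟨hxv, hxt, hxS⟩
          · have hxt : x = t' j := by
              by_contra hxt; exact hsuf j x hxq hxt s h hsS
            have hst : s = t' j :=
              huniqB j s ((q' j).support_dropUntil_subset hxq h) (Set.mem_insert_of_mem _ hsS)
            have hxS : x ∈ S₀ := by rw [hxt, ← hst]; exact hsS
            have hxv : x = v' i := huniqA i x hxp (Set.mem_insert_of_mem _ hxS)
            exact ⟨hxv, hxt, hxS⟩
        have ha₀q : ∀ j, a₀ ∉ (q' j).support := by
          intro j hmem
          have ha₀t : a₀ ≠ t' j := by
            intro h
            rcases Set.mem_insert_iff.mp (h ▸ ht' j) with h2 | h2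
            · exact hab h2
            · exact ha₀S h2
          obtain ⟨s, hsS, hsW⟩ := hS₀sep a₀ ha₀ (w j) (hw j) ((q' j).dropUntil a₀ hmem)
          exact hsuf j a₀ hmem ha₀t s hsW hsS
        have hQavoid : ∀ j, t' j = b₀ → ∀ y ∈ (q' j).support, y ∉ S₀ := by
          intro j hj y hy hyS
          have hyt : y = t' j := huniqB j y hy (Set.mem_insert_of_mem _ hyS)
          rw [hyt, hj] at hyS
          exact hb₀S hyS
        have hb₀p : ∀ i, b₀ ∉ (p' i).support := by
          intro i hmem
          obtain ⟨j₀, hj₀⟩ := ht'surj b₀ (Set.mem_insert _ _)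
          have hb₀v : b₀ ≠ v' i := by
            intro h
            rcases Set.mem_insert_iff.mp (h ▸ hv' i) with h2 | h2
            · exact hab h2.symm
            · exact hb₀S h2
          obtain ⟨s, hsS, hsW⟩ := hS₀sep (u i) (hu i) (w j₀) (hw j₀)
            (((p' i).takeUntil b₀ hmem).append ((q' j₀).copy hj₀ rfl))
          rw [Walk.mem_support_append_iff] at hsW
          rcases hsW with h | h
          · exact hpre i b₀ hmem hb₀v s h hsS
          · rw [Walk.support_copy] at h
            exact hQavoid j₀ hj₀ s h hsS
        set τ : Fin k → V := fun i => if v' i = a₀ then b₀ else v' i with hτ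
        have hτmem : ∀ i, τ i ∈ insert b₀ S₀ := by
          intro i
          by_cases h : v' i = a₀
          · simp only [hτ, h, if_pos rfl]
            exact Set.mem_insert _ _
          · simp only [hτ, if_neg h]
            rcases Set.mem_insert_iff.mp (hv' i) with h2 | h2
            · exact absurd h2 h
            · exact Set.mem_insert_of_mem _ h2
        have hτinj : Function.Injective τ := by
          intro i j hij
          by_cases hi : v' i = a₀ <;> by_cases hj : v' j = a₀
          · exact hv'inj (hi.trans hj.symm)
          · exfalso
            simp only [hτ, if_pos hi, if_neg hj] at hij
            rcases Set.mem_insert_iff.mp (hv' j) with h2 | h2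
            · exact hj h2
            · exact hb₀S (hij ▸ h2)
          · exfalso
            simp only [hτ, if_neg hi, if_pos hj] at hij
            rcases Set.mem_insert_iff.mp (hv' i) with h2 | h2
            · exact hi h2
            · exact hb₀S (hij.symm ▸ h2)
          · simp only [hτ, if_neg hi, if_neg hj] at hij
            exact hv'inj hij
        choose σ hσ using fun i => ht'surj (τ i) (hτmem i)
        have hσinj : Function.Injective σ := by
          intro i j hij
          exact hτinj (by rw [← hσ i, ← hσ j, hij])
        have hcondP : ∀ i, ∀ f ∈ (p' i).edges, f ∈ G.edgeSet := by
          intro i f hf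
          have h2 : f ∈ G'.edgeSet := (p' i).edges_subset_edgeSet hf
          rw [hE'] at h2
          exact h2.1
        have hcondQ : ∀ j, ∀ f ∈ (q' j).edges, f ∈ G.edgeSet := by
          intro j f hf
          have h2 : f ∈ G'.edgeSet := (q' j).edges_subset_edgeSet hf
          rw [hE'] at h2
          exact h2.1
        have hcon : ∀ i, ∃ r : G.Walk (u i) (w (σ i)), r.IsPath ∧
            ∀ x, x ∈ r.support ↔ (x ∈ (p' i).support ∨ x ∈ (q' (σ i)).support) := by
          intro i
          have hPg : ((p' i).transfer G (hcondP i)).support = (p' i).support :=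
            (p' i).support_transfer _
          have hQg : ((q' (σ i)).transfer G (hcondQ (σ i))).support = (q' (σ i)).support :=
            (q' (σ i)).support_transfer _
          have hPgpath : ((p' i).transfer G (hcondP i)).IsPath := (hp' i).transfer _
          have hQgpath : ((q' (σ i)).transfer G (hcondQ (σ i))).IsPath := (hq' (σ i)).transfer _
          by_cases hia : v' i = a₀
          · have hσb : t' (σ i) = b₀ := by
              rw [hσ i]; simp only [hτ, if_pos hia]
            refine ⟨((p' i).transfer G (hcondP i)).append
              ((Walk.cons hadj (((q' (σ i)).transfer G (hcondQ (σ i))).copy hσb rfl)).copy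
                hia.symm rfl), ?_, ?_⟩
            · apply appendPath hPgpath
              · rw [Walk.isPath_copy, Walk.cons_isPath_iff]
                refine ⟨by rw [Walk.isPath_copy]; exact hQgpath, ?_⟩
                rw [Walk.support_copy, hQg]
                exact ha₀q (σ i)
              · intro x hx1 hx2
                rw [hPg] at hx1
                rw [Walk.support_copy, Walk.support_cons] at hx2
                rcases List.mem_cons.mp hx2 with h2 | h2
                · rw [h2, hia]
                · rw [Walk.support_copy, hQg] at h2
                  exact (hcross i (σ i) x hx1 h2).1
            · intro x
              rw [Walk.mem_support_append_iff, hPg, Walk.support_copy, Walk.support_cons]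
              constructor
              · rintro (h2 | h2)
                · exact Or.inl h2
                · rcases List.mem_cons.mp h2 with h3 | h3
                  · left; rw [h3, ← hia]; exact (p' i).end_mem_support
                  · right; rwa [Walk.support_copy, hQg] at h3
              · rintro (h2 | h2)
                · exact Or.inl h2
                · right
                  refine List.mem_cons_of_mem _ ?_
                  rwa [Walk.support_copy, hQg]
          · have hσv : t' (σ i) = v' i := by
              rw [hσ i]; simp only [hτ, if_neg hia]
            refine ⟨((p' i).transfer G (hcondP i)).append
              (((q' (σ i)).transfer G (hcondQ (σ i))).copy hσv rfl), ?_, ?_⟩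
            · apply appendPath hPgpath
              · rw [Walk.isPath_copy]; exact hQgpath
              · intro x hx1 hx2
                rw [hPg] at hx1
                rw [Walk.support_copy, hQg] at hx2
                exact (hcross i (σ i) x hx1 hx2).1
            · intro x
              rw [Walk.mem_support_append_iff, hPg, Walk.support_copy, hQg]
        choose r hr1 hr2 using hcon
        refine ⟨u, fun i => w (σ i), r, hr1, hu, fun i => hw (σ i), ?_⟩
        intro i j hij x hxi hxj
        rw [hr2 i] at hxi
        rw [hr2 j] at hxj
        have hvne : ∀ i' j' : Fin k, i' ≠ j' → x ∈ (p' i').support →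
            x ∈ (q' (σ j')).support → False := by
          intro i' j' hne hxp hxq
          obtain ⟨h1, h2, h3⟩ := hcross i' (σ j') x hxp hxq
          have hτx : τ j' = x := by rw [← hσ j', h2]
          by_cases hja : v' j' = a₀
          · rw [hτ] at hτx
            simp only [if_pos hja] at hτx
            rw [← hτx] at h3
            exact hb₀S h3
          · rw [hτ] at hτx
            simp only [if_neg hja] at hτx
            exact hne (hv'inj (h1.symm.trans hτx.symm))
        rcases hxi with hxi | hxi <;> rcases hxj with hxj | hxj
        · exact hdisjA' i j hij x hxi hxj
        · exact hvne i j hij hxi hxj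
        · exact hvne j i (Ne.symm hij) hxj hxi
        · exact hdisjB' (σ i) (σ j) (fun h => hij (hσinj h)) x hxi hxj
    · -- no edge leaves A : all A–B walks are trivial, A ∩ B works
      have hsepAB : MSep G A B (A ∩ B) := by
        intro a ha b hb w
        cases w with
        | nil => exact ⟨a, ⟨ha, hb⟩, Walk.start_mem_support _⟩
        | cons h rest => exact absurd ⟨_, _, ha, h⟩ hE
      have hk : k ≤ (A ∩ B).ncard := hsep _ hsepAB
      rw [Set.ncard_eq_toFinset_card'] at hk
      obtain ⟨t, hts, htc⟩ := Finset.exists_subset_card_eq hk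
      set f : Fin k → V := fun i => (t.equivFin.symm (Fin.cast htc.symm i)).1 with hf
      have hfinj : Function.Injective f := by
        intro i j hij
        have := Subtype.ext hij
        have := t.equivFin.symm.injective this
        simpa [Fin.ext_iff] using this
      have hfmem : ∀ i, f i ∈ A ∩ B := by
        intro i
        have : f i ∈ t := (t.equivFin.symm (Fin.cast htc.symm i)).2
        have := hts this
        rwa [Set.mem_toFinset] at this
      refine ⟨f, f, fun i => Walk.nil, fun i => Walk.IsPath.nil, fun i => (hfmem i).1,
        fun i => (hfmem i).2, ?_⟩
      intro i j hij x hxi hxj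
      simp only [Walk.support_nil, List.mem_singleton] at hxi hxj
      exact hij (hfinj (by rw [← hxi, ← hxj]))

lemma lastSplit {x y s : V} (w : G.Walk x y) (hs : s ∈ w.support) (hsy : s ≠ y) :
    ∃ (n : V) (_ : G.Adj s n) (w₂ : G.Walk n y),
      (∀ v ∈ w₂.support, v ∈ w.support) ∧ s ∉ w₂.support := by
  induction w with
  | @nil a =>
    simp only [Walk.support_nil, List.mem_singleton] at hs
    exact absurd hs hsy
  | @cons a a₂ c h rest ih =>
    by_cases hmem : s ∈ rest.support
    · obtain ⟨n, hadj, w₂, hsub, hns⟩ := ih hmem hsy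
      exact ⟨n, hadj, w₂, fun v hv => by
        rw [Walk.support_cons]; exact List.mem_cons_of_mem _ (hsub v hv), hns⟩
    · have hsa : s = a := by
        rw [Walk.support_cons] at hs
        rcases List.mem_cons.mp hs with h2 | h2
        · exact h2
        · exact absurd h2 hmem
      subst hsa
      exact ⟨a₂, h, rest, fun v hv => by
        rw [Walk.support_cons]; exact List.mem_cons_of_mem _ hv, hmem⟩


lemma sep_bound [Fintype V] {G : SimpleGraph V} {α : ℝ} {d z : ℕ}
    (hα0 : 0 < α) (hα1 : α < 1) (hG : IsExpander G α) (hd : DegLE G d) (hd1 : 1 ≤ d)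
    {A B : Set V} (hAB : Disjoint A B) (hA : A.ncard = z) (hB : B.ncard = z) (hz : 1 ≤ z)
    (S : Set V) (hS : MSep G A B S) : ⌈α * z / d⌉₊ ≤ S.ncard := by
  classical
  have hdpos : (0:ℝ) < d := by exact_mod_cast hd1
  -- pass to a minimal sub-separator S'
  obtain ⟨S', hsub, hS', hmin⟩ : ∃ S', S' ⊆ S ∧ MSep G A B S' ∧
      ∀ s ∈ S', ¬ MSep G A B (S' \ {s}) := by
    set Ns : Set ℕ := {n | ∃ S', S' ⊆ S ∧ MSep G A B S' ∧ S'.ncard = n} with hNs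
    have hne : Ns.Nonempty := ⟨S.ncard, S, le_refl S, hS, rfl⟩
    obtain ⟨S', hsub, hsep', hncard⟩ := Nat.sInf_mem hne
    refine ⟨S', hsub, hsep', fun s hs hcontra => ?_⟩
    have hmem : (S' \ {s}).ncard ∈ Ns :=
      ⟨S' \ {s}, le_trans Set.diff_subset hsub, hcontra, rfl⟩
    have hle := Nat.sInf_le hmem
    have hlt : (S' \ {s}).ncard < S'.ncard :=
      Set.ncard_diff_singleton_lt_of_mem hs (Set.toFinite _)
    omega
  have hcard' : S'.ncard ≤ S.ncard := Set.ncard_le_ncard hsub (Set.toFinite _)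
  refine le_trans ?_ hcard'
  set m := (S' \ B).ncard with hm
  set c := (S' ∩ B).ncard with hc
  have hmc : m + c = S'.ncard := by
    rw [hm, hc, ← Set.ncard_union_eq ((disjoint_sdiff_self_left.mono_right Set.inter_subset_right)) (Set.toFinite _)
      (Set.toFinite _), Set.diff_union_inter]
  by_cases hzm : z ≤ m
  · refine le_trans (Nat.ceil_le.mpr ?_) (le_trans hzm (by omega))
    rw [div_le_iff₀ hdpos]
    calc α * z ≤ 1 * z := by
          apply mul_le_mul_of_nonneg_right (le_of_lt hα1) (by positivity)
      _ = (z:ℝ) := one_mul _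
      _ ≤ (z:ℝ) * d := le_mul_of_one_le_right (by positivity) (by exact_mod_cast hd1)
  · push_neg at hzm
    -- the set of vertices reachable from A avoiding S'
    set X : Set V := {x | ∃ a ∈ A, ∃ wk : G.Walk a x, ∀ s ∈ S', s ∉ wk.support} with hX
    have hXS : ∀ x ∈ X, x ∉ S' := by
      rintro x ⟨a, ha, wk, havoid⟩ hxS
      exact havoid x hxS wk.end_mem_support
    have hBX : ∀ b ∈ B, b ∉ X := by
      rintro b hb ⟨a, ha, wk, havoid⟩
      obtain ⟨s, hs, hsw⟩ := hS' a ha b hb wk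
      exact havoid s hs hsw
    have hAX : A \ S' ⊆ X := by
      rintro a ⟨ha, haS⟩
      exact ⟨a, ha, Walk.nil, fun s hs hsupp => by
        simp only [Walk.support_nil, List.mem_singleton] at hsupp
        exact haS (hsupp ▸ hs)⟩
    have hAdiff : A \ S' = A \ (S' \ B) := by
      ext a
      simp only [Set.mem_diff, Set.mem_diff]
      constructor
      · rintro ⟨ha, haS⟩; exact ⟨ha, fun h => haS h.1⟩
      · rintro ⟨ha, haS⟩
        refine ⟨ha, fun h => haS ⟨h, ?_⟩⟩
        exact fun hab => (Set.disjoint_left.mp hAB ha) hab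
    have hAcard : z - m ≤ (A \ S').ncard := by
      rw [hAdiff]
      have h1 : A ⊆ (A \ (S' \ B)) ∪ (S' \ B) := by
        intro a ha
        by_cases h2 : a ∈ S' \ B
        · exact Or.inr h2
        · exact Or.inl ⟨ha, h2⟩
      have h2 : A.ncard ≤ (A \ (S' \ B)).ncard + (S' \ B).ncard :=
        le_trans (Set.ncard_le_ncard h1 (Set.toFinite _)) (Set.ncard_union_le _ _)
      omega
    have hXne : X.Nonempty := by
      rcases Set.nonempty_of_ncard_ne_zero (s := A \ S') (by omega) with ⟨a, ha⟩
      exact ⟨a, hAX ha⟩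
    have hXcne : Xᶜ.Nonempty := by
      rcases Set.nonempty_of_ncard_ne_zero (s := B) (by omega) with ⟨b, hb⟩
      exact ⟨b, hBX b hb⟩
    have hmin_ge : z - m ≤ min (Nat.card ↥X) (Nat.card ↥(Xᶜ)) := by
      rw [Nat.card_coe_set_eq, Nat.card_coe_set_eq]
      refine le_min (le_trans hAcard (Set.ncard_le_ncard hAX (Set.toFinite _))) ?_
      have : B ⊆ Xᶜ := fun b hb => hBX b hb
      have := Set.ncard_le_ncard this (Set.toFinite _)
      omega
    -- the cut bound
    have hcut : cutCard G X Xᶜ ≤ (d - 1) * m + d * c := by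
      set N : V → Finset V := fun s => Finset.univ.filter (fun y => y ∈ X ∧ G.Adj y s) with hN
      have hdeg : ∀ s : V, (Finset.univ.filter (fun y => G.Adj s y)).card ≤ d := by
        intro s
        have h0 := hd s
        rwa [Nat.card_coe_set_eq, Set.ncard_eq_toFinset_card', Set.toFinset_setOf] at h0
      have hsnd : ∀ pq : V × V, pq.1 ∈ X → pq.2 ∈ Xᶜ → G.Adj pq.1 pq.2 → pq.2 ∈ S' := by
        rintro ⟨p, q⟩ hp hq hadj
        by_contra hqS
        obtain ⟨a, ha, wk, havoid⟩ := hp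
        refine hq ⟨a, ha, wk.concat hadj, ?_⟩
        intro s hsS' hsupp
        rw [Walk.support_concat] at hsupp
        rcases List.mem_append.mp hsupp with h | h
        · exact havoid s hsS' h
        · rw [List.mem_singleton] at h
          exact hqS (h ▸ hsS')
      have hccard : cutCard G X Xᶜ = (Finset.univ.filter
          (fun pq : V × V => pq.1 ∈ X ∧ pq.2 ∈ Xᶜ ∧ G.Adj pq.1 pq.2)).card := by
        rw [cutCard, Nat.card_eq_fintype_card]
        exact Fintype.card_subtype _
      have hsubset : (Finset.univ.filter
          (fun pq : V × V => pq.1 ∈ X ∧ pq.2 ∈ Xᶜ ∧ G.Adj pq.1 pq.2)) ⊆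
          (S'.toFinset).biUnion (fun s => (N s).image (fun y => (y, s))) := by
        intro pq hpq
        rw [Finset.mem_filter] at hpq
        obtain ⟨-, h1, h2, h3⟩ := hpq
        rw [Finset.mem_biUnion]
        refine ⟨pq.2, Set.mem_toFinset.mpr (hsnd pq h1 h2 h3), ?_⟩
        rw [Finset.mem_image]
        exact ⟨pq.1, by simp [hN, h1, h3], by simp⟩
      have hNle : ∀ s, (N s).card ≤ d := by
        intro s
        refine le_trans (Finset.card_le_card ?_) (hdeg s)
        intro y hy
        simp only [hN, Finset.mem_filter, Finset.mem_univ, true_and] at hy ⊢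
        exact hy.2.symm
      have hNle' : ∀ s ∈ S', s ∉ B → (N s).card ≤ d - 1 := by
        intro s hsS hsB
        have hnot := hmin s hsS
        rw [MSep] at hnot
        push_neg at hnot
        obtain ⟨a, ha, b, hb, wk, havoid⟩ := hnot
        have hsw : s ∈ wk.support := by
          obtain ⟨x, hx, hxw⟩ := hS' a ha b hb wk
          by_cases hxs : x = s
          · exact hxs ▸ hxw
          · exact absurd hxw (havoid x ⟨hx, hxs⟩)
        have hsb : s ≠ b := fun h => hsB (h ▸ hb)
        obtain ⟨nb, hadjnb, w₂, hw₂sub, hsw₂⟩ := lastSplit wk hsw hsb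
        have hnbX : nb ∉ X := by
          rintro ⟨a', ha', wk', havoid'⟩
          obtain ⟨x, hx, hxw⟩ := hS' a' ha' b hb (wk'.append w₂)
          rw [Walk.mem_support_append_iff] at hxw
          rcases hxw with h | h
          · exact havoid' x hx h
          · have hxwk := hw₂sub x h
            by_cases hxs : x = s
            · exact hsw₂ (hxs ▸ h)
            · exact havoid x ⟨hx, hxs⟩ hxwk
        have hsub2 : N s ⊆ (Finset.univ.filter (fun y => G.Adj s y)).erase nb := by
          intro y hy
          simp only [hN, Finset.mem_filter, Finset.mem_univ, true_and] at hy
          rw [Finset.mem_erase]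
          refine ⟨fun h => hnbX (h ▸ hy.1), ?_⟩
          simp only [Finset.mem_filter, Finset.mem_univ, true_and]
          exact hy.2.symm
        refine le_trans (Finset.card_le_card hsub2) ?_
        rw [Finset.card_erase_of_mem (by simp [hadjnb])]
        exact Nat.sub_le_sub_right (hdeg s) 1
      rw [hccard]
      refine le_trans (Finset.card_le_card hsubset) ?_
      refine le_trans (Finset.card_biUnion_le) ?_
      have hsplit : S'.toFinset = (S' \ B).toFinset ∪ (S' ∩ B).toFinset := by
        rw [← Set.toFinset_union]
        exact Set.toFinset_congr (Set.diff_union_inter _ _).symm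
      have hdisjf : Disjoint ((S' \ B).toFinset) ((S' ∩ B).toFinset) := by
        rw [Set.disjoint_toFinset]
        exact disjoint_sdiff_self_left.mono_right Set.inter_subset_right
      rw [hsplit, Finset.sum_union hdisjf]
      refine add_le_add ?_ ?_
      · refine le_trans (Finset.sum_le_card_nsmul _ _ (d-1) ?_) ?_
        · intro s hs
          rw [Set.mem_toFinset, Set.mem_diff] at hs
          exact le_trans (Finset.card_image_le) (hNle' s hs.1 hs.2)
        · rw [smul_eq_mul, ← Set.ncard_eq_toFinset_card', ← hm, Nat.mul_comm]
      · refine le_trans (Finset.sum_le_card_nsmul _ _ d ?_) ?_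
        · intro s hs
          exact le_trans (Finset.card_image_le) (hNle s)
        · rw [smul_eq_mul, ← Set.ncard_eq_toFinset_card', ← hc, Nat.mul_comm]
    -- combine
    have hexp := hG X hXne hXcne
    have hzmR : ((z - m : ℕ) : ℝ) = (z:ℝ) - m := by
      rw [Nat.cast_sub (le_of_lt hzm)]
    have hminR : ((z:ℝ) - m) ≤ (min (Nat.card ↥X) (Nat.card ↥(Xᶜ)) : ℝ) := by
      rw [← hzmR]
      exact_mod_cast hmin_ge
    have h1 : α * ((z:ℝ) - m) ≤ (cutCard G X Xᶜ : ℝ) :=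
      le_trans (mul_le_mul_of_nonneg_left hminR (le_of_lt hα0)) hexp
    have h2 : (cutCard G X Xᶜ : ℝ) ≤ ((d:ℝ) - 1) * m + d * c := by
      have := hcut
      have hcast : (((d - 1) * m + d * c : ℕ) : ℝ) = ((d:ℝ) - 1) * m + d * c := by
        push_cast [Nat.cast_sub hd1]
        ring
      calc (cutCard G X Xᶜ : ℝ) ≤ (((d - 1) * m + d * c : ℕ) : ℝ) := by exact_mod_cast hcut
        _ = ((d:ℝ) - 1) * m + d * c := hcast
    have h3 : α * z ≤ (d:ℝ) * (m + c) := by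
      have hαm : α * m ≤ (m:ℝ) := by
        calc α * m ≤ 1 * m := mul_le_mul_of_nonneg_right (le_of_lt hα1) (by positivity)
          _ = (m:ℝ) := one_mul _
      have : α * z = α * ((z:ℝ) - m) + α * m := by ring
      rw [this]
      calc α * ((z:ℝ) - m) + α * m ≤ (((d:ℝ) - 1) * m + d * c) + m :=
            add_le_add (le_trans h1 h2) hαm
        _ = (d:ℝ) * (m + c) := by ring
    rw [← hmc]
    rw [Nat.ceil_le, div_le_iff₀ hdpos]
    calc α * z ≤ (d:ℝ) * (m + c) := h3
      _ = ((m + c : ℕ) : ℝ) * d := by push_cast; ring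

end MengerAux

/-- Flow in expanders: if `G` is an `α`-expander (`0 < α < 1`) of maximum degree at most
`d`, and `A, B` are disjoint vertex sets of size `z ≥ 1` each, then `G` contains
`⌈α·z/d⌉` pairwise vertex-disjoint paths connecting vertices of `A` to vertices of `B`. -/
theorem disjoint_paths_in_expander (V : Type) [Fintype V] (G : SimpleGraph V)
    (α : ℝ) (d z : ℕ) (hα0 : 0 < α) (hα1 : α < 1)
    (hG : IsExpander G α) (hd : DegLE G d)
    (A B : Set V) (hAB : Disjoint A B)
    (hA : Nat.card ↥A = z) (hB : Nat.card ↥B = z) (hz : 1 ≤ z) :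
    ∃ (u v : Fin ⌈α * z / d⌉₊ → V) (p : ∀ i, G.Walk (u i) (v i)),
      (∀ i, (p i).IsPath) ∧ (∀ i, u i ∈ A) ∧ (∀ i, v i ∈ B) ∧
      (∀ i j, i ≠ j → ∀ x, x ∈ (p i).support → x ∉ (p j).support) := by
  classical
  by_cases hd0 : d = 0
  · subst hd0
    have h0 : ⌈α * z / ((0:ℕ):ℝ)⌉₊ = 0 := by simp
    rw [show (⌈α * z / ((0:ℕ):ℝ)⌉₊) = 0 from h0]
    exact ⟨Fin.elim0, Fin.elim0, fun i => i.elim0, fun i => i.elim0, fun i => i.elim0,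
      fun i => i.elim0, fun i => i.elim0⟩
  · have hd1 : 1 ≤ d := Nat.one_le_iff_ne_zero.mpr hd0
    have hA' : A.ncard = z := ((Nat.card_coe_set_eq A).symm).trans hA
    have hB' : B.ncard = z := ((Nat.card_coe_set_eq B).symm).trans hB
    exact mengerAux (Nat.card G.edgeSet) G A B _ le_rfl
      (fun S hs => sep_bound hα0 hα1 hG hd hd1 hAB hA' hB' hz S hs)
end

section
/- Let G = (V,E) be a connected graph and let (X,Y) be a cut in G. Then there exists a cut (X*, Y*) in G whose sparsity is at most the sparsity of (X,Y), such that both induced subgraphs G[X*] and G[Y*] are connected. -/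
set_option linter.unusedVariables false
set_option linter.unusedSectionVars false
namespace ConnCut

open SimpleGraph Set

variable {V : Type*} [Fintype V]

/-- The spanning subgraph of `G` keeping only edges inside `S`. -/
@[reducible]
def restrict (G : SimpleGraph V) (S : Set V) : SimpleGraph V where
  Adj a b := a ∈ S ∧ b ∈ S ∧ G.Adj a b
  symm := ⟨fun a b (h : a ∈ S ∧ b ∈ S ∧ G.Adj a b) => (⟨h.2.1, h.1, h.2.2.symm⟩ : b ∈ S ∧ a ∈ S ∧ G.Adj b a)⟩
  loopless := ⟨fun a (h : a ∈ S ∧ a ∈ S ∧ G.Adj a a) => G.irrefl h.2.2⟩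

/-- The connected component of `v` in `G[S]`, as a set of vertices of `V`. -/
def comp (G : SimpleGraph V) (S : Set V) (v : V) : Set V :=
  {w | (restrict G S).Reachable v w}

variable {G : SimpleGraph V}

lemma mem_comp_self (S : Set V) (v : V) : v ∈ comp G S v := SimpleGraph.Reachable.refl v

lemma comp_closed {S : Set V} {v a b : V} (ha : a ∈ comp G S v)
    (hab : (restrict G S).Adj a b) : b ∈ comp G S v :=
  SimpleGraph.Reachable.trans ha hab.reachable

lemma comp_subset {S : Set V} {v : V} (hv : v ∈ S) : comp G S v ⊆ S := by
  intro w hw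
  obtain ⟨p⟩ := (hw : (restrict G S).Reachable v w).symm
  cases p with
  | nil => exact hv
  | cons h _ => exact h.1

lemma walk_reach_induce {S C : Set V}
    (hC : ∀ ⦃a b⦄, a ∈ C → (restrict G S).Adj a b → b ∈ C) :
    ∀ {a b : V}, (restrict G S).Walk a b → ∀ ha : a ∈ C,
      ∃ hb : b ∈ C, (G.induce C).Reachable ⟨a, ha⟩ ⟨b, hb⟩ := by
  intro a b p
  induction p with
  | nil => exact fun ha => ⟨ha, SimpleGraph.Reachable.refl _⟩
  | @cons a x b h q ih =>
    intro ha
    have hx : x ∈ C := hC ha h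
    obtain ⟨hb, r⟩ := ih hx
    have hadj : (G.induce C).Adj ⟨a, ha⟩ ⟨x, hx⟩ := h.2.2
    exact ⟨hb, hadj.reachable.trans r⟩

lemma comp_induce_connected {S : Set V} {v : V} (hv : v ∈ S) :
    (G.induce (comp G S v)).Connected := by
  rw [SimpleGraph.connected_iff]
  refine ⟨?_, ⟨⟨v, mem_comp_self S v⟩⟩⟩
  rintro ⟨a, ha⟩ ⟨b, hb⟩
  obtain ⟨p⟩ := ((ha : (restrict G S).Reachable v a).symm.trans hb)
  obtain ⟨hb', r⟩ := walk_reach_induce (fun _ _ h hab => comp_closed h hab) p ha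
  exact r

lemma comp_eq_of_closed {S S' : Set V} (hsub : S' ⊆ S)
    (hcl : ∀ ⦃a b⦄, a ∈ S' → (restrict G S).Adj a b → b ∈ S')
    {w : V} (hw : w ∈ S') : comp G S' w = comp G S w := by
  have aux : ∀ {a b : V}, (restrict G S).Walk a b → a ∈ S' →
      (restrict G S').Reachable w a → (restrict G S').Reachable w b := by
    intro a b p
    induction p with
    | nil => exact fun _ h => h
    | @cons a x b h q ih =>
      intro ha hwa
      have hx : x ∈ S' := hcl ha h
      exact ih hx (hwa.trans (SimpleGraph.Adj.reachable ⟨ha, hx, h.2.2⟩))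
  apply Set.Subset.antisymm
  · intro b hb
    refine SimpleGraph.Reachable.mono ?_ hb
    intro a c h
    exact ⟨hsub h.1, hsub h.2.1, h.2.2⟩
  · intro b hb
    obtain ⟨p⟩ := (hb : (restrict G S).Reachable w b)
    exact aux p hw (SimpleGraph.Reachable.refl w)


open SimpleGraph Set
variable {V : Type*} [Fintype V] {G : SimpleGraph V}

lemma cutCard_eq_ncard (G : SimpleGraph V) (A B : Set V) :
    cutCard G A B = Set.ncard {p : V × V | p.1 ∈ A ∧ p.2 ∈ B ∧ G.Adj p.1 p.2} := by
  rw [← Nat.card_coe_set_eq]; rfl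

lemma cutCard_comm (G : SimpleGraph V) (A B : Set V) : cutCard G A B = cutCard G B A :=
  Nat.card_congr
    ⟨fun x => ⟨(x.1.2, x.1.1), x.2.2.1, x.2.1, x.2.2.2.symm⟩,
     fun x => ⟨(x.1.2, x.1.1), x.2.2.1, x.2.1, x.2.2.2.symm⟩,
     fun x => rfl, fun x => rfl⟩

lemma cutCard_congr_right {A B B' : Set V}
    (h : ∀ a b, a ∈ A → G.Adj a b → (b ∈ B ↔ b ∈ B')) :
    cutCard G A B = cutCard G A B' :=
  Nat.card_congr (Equiv.subtypeEquivRight fun p =>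
    ⟨fun hp => ⟨hp.1, (h _ _ hp.1 hp.2.2).mp hp.2.1, hp.2.2⟩,
     fun hp => ⟨hp.1, (h _ _ hp.1 hp.2.2).mpr hp.2.1, hp.2.2⟩⟩)

lemma cutCard_mono {A A' B B' : Set V} (hA : A ⊆ A') (hB : B ⊆ B') :
    cutCard G A B ≤ cutCard G A' B' := by
  rw [cutCard_eq_ncard, cutCard_eq_ncard]
  exact Set.ncard_le_ncard (fun p hp => ⟨hA hp.1, hB hp.2.1, hp.2.2⟩) (Set.toFinite _)

lemma cutCard_union_left {A A' : Set V} (B : Set V) (h : Disjoint A A') :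
    cutCard G (A ∪ A') B = cutCard G A B + cutCard G A' B := by
  rw [cutCard_eq_ncard, cutCard_eq_ncard, cutCard_eq_ncard]
  rw [show {p : V × V | p.1 ∈ A ∪ A' ∧ p.2 ∈ B ∧ G.Adj p.1 p.2}
      = {p : V × V | p.1 ∈ A ∧ p.2 ∈ B ∧ G.Adj p.1 p.2}
        ∪ {p : V × V | p.1 ∈ A' ∧ p.2 ∈ B ∧ G.Adj p.1 p.2}
      from by ext p; simp only [Set.mem_setOf_eq, Set.mem_union]; tauto]
  refine Set.ncard_union_eq ?_ (Set.toFinite _) (Set.toFinite _)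
  rw [Set.disjoint_left]
  rintro p ⟨hp, -⟩ ⟨hp', -⟩
  exact Set.disjoint_left.mp h hp hp'

lemma cutCard_comp_compl {S : Set V} {v : V} (hv : v ∈ S) :
    cutCard G (comp G S v) (comp G S v)ᶜ = cutCard G (comp G S v) Sᶜ := by
  apply cutCard_congr_right
  intro a b ha hab
  constructor
  · intro hb hbS
    exact hb (comp_closed ha ⟨comp_subset hv ha, hbS, hab⟩)
  · intro hb hbc
    exact hb (comp_subset hv hbc)


open SimpleGraph Set
variable {V : Type*} [Fintype V] {G : SimpleGraph V}

/-- Averaging over components: some component of `G[S]` has crossing-ratio at most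
that of `S` itself. -/
lemma exists_good_comp (G : SimpleGraph V) (S : Set V) (hS : S.Nonempty) :
    ∃ v ∈ S, cutCard G (comp G S v) Sᶜ * S.ncard ≤ cutCard G S Sᶜ * (comp G S v).ncard := by
  have H : ∀ n (S : Set V), S.ncard = n → S.Nonempty →
      ∃ v ∈ S, cutCard G (comp G S v) Sᶜ * S.ncard
        ≤ cutCard G S Sᶜ * (comp G S v).ncard := by
    intro n
    induction n using Nat.strong_induction_on with
    | _ n ih =>
      intro S hn hSne
      obtain ⟨v, hv⟩ := hSne
      by_cases hCS : comp G S v = S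
      · exact ⟨v, hv, by rw [hCS]⟩
      · set C := comp G S v with hC
        set S' := S \ C with hS'
        have hCsub : C ⊆ S := comp_subset hv
        have hS'sub : S' ⊆ S := Set.diff_subset
        have hS'ne : S'.Nonempty :=
          Set.diff_nonempty.mpr fun h => hCS (Set.Subset.antisymm hCsub h)
        have hcl : ∀ ⦃a b⦄, a ∈ S' → (restrict G S).Adj a b → b ∈ S' := by
          rintro a b ⟨haS, haC⟩ hab
          exact ⟨hab.2.1, fun hbC => haC (comp_closed hbC hab.symm)⟩
        have hCpos : 0 < C.ncard := (Set.ncard_pos (Set.toFinite _)).mpr ⟨v, mem_comp_self S v⟩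
        have hS'pos : 0 < S'.ncard := (Set.ncard_pos (Set.toFinite _)).mpr hS'ne
        have hcard : S.ncard = C.ncard + S'.ncard := by
          rw [hS', ← Set.ncard_union_eq Set.disjoint_sdiff_right (Set.toFinite _)
            (Set.toFinite _), Set.union_diff_cancel hCsub]
        have hlt : S'.ncard < n := by omega
        obtain ⟨w, hw, hineq⟩ := ih S'.ncard hlt S' rfl hS'ne
        have hcompeq : comp G S' w = comp G S w := comp_eq_of_closed hS'sub hcl hw
        set D := comp G S w with hD
        have hDsub : D ⊆ S' := by rw [← hcompeq]; exact comp_subset hw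
        -- rewrite the cut cards appearing in `hineq`
        have hb : cutCard G D S'ᶜ = cutCard G D Sᶜ := by
          apply cutCard_congr_right
          intro a b ha hab
          constructor
          · intro hbS' hbS
            exact hbS' (hDsub (comp_closed ha ⟨hS'sub (hDsub ha), hbS, hab⟩))
          · intro hbS hbS'
            exact hbS (hS'sub hbS')
        have hc : cutCard G S' S'ᶜ = cutCard G S' Sᶜ := by
          apply cutCard_congr_right
          intro a b ha hab
          constructor
          · intro hbS' hbS
            exact hbS' (hcl ha ⟨hS'sub ha, hbS, hab⟩)
          · intro hbS hbS'
            exact hbS (hS'sub hbS')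
        rw [hcompeq, hb, hc] at hineq
        have hd : cutCard G S Sᶜ = cutCard G C Sᶜ + cutCard G S' Sᶜ := by
          rw [show S = C ∪ S' from (Set.union_diff_cancel hCsub).symm,
            cutCard_union_left _ Set.disjoint_sdiff_right]
        set e1 := cutCard G C Sᶜ
        set e2 := cutCard G S' Sᶜ
        set eD := cutCard G D Sᶜ
        by_cases hcase : e1 * S'.ncard ≤ e2 * C.ncard
        · refine ⟨v, hv, ?_⟩
          rw [← hC, hcard, hd]
          nlinarith [hcase]
        · refine ⟨w, hS'sub hw, ?_⟩
          rw [← hD, hcard, hd]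
          push_neg at hcase
          have key : eD * (C.ncard + S'.ncard) * S'.ncard
              ≤ (e1 + e2) * D.ncard * S'.ncard := by
            nlinarith [Nat.mul_le_mul_right C.ncard hineq,
              Nat.mul_le_mul_right S'.ncard hineq,
              Nat.mul_le_mul_right D.ncard hcase.le]
          exact Nat.le_of_mul_le_mul_right key hS'pos
  exact H S.ncard S rfl hS


open SimpleGraph Set
variable {V : Type*} [Fintype V] {G : SimpleGraph V}

lemma reach_induce_mono {A B : Set V} (h : A ⊆ B) {x y : {v // v ∈ A}}
    (r : (G.induce A).Reachable x y) :
    (G.induce B).Reachable ⟨x.1, h x.2⟩ ⟨y.1, h y.2⟩ := by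
  refine r.map (⟨fun z => ⟨z.1, h z.2⟩, ?_⟩ : G.induce A →g G.induce B)
  intro a b hab
  exact hab

/-- If `G` is connected and `G[A]` is connected, then the complement of any
component `D` of `G[Aᶜ]` induces a connected graph (it is `A` together with the
other components, each of which attaches to `A`). -/
lemma compl_comp_connected (hG : G.Connected) {A : Set V} (hA : A.Nonempty)
    (hAconn : (G.induce A).Connected) {w : V} (hw : w ∈ Aᶜ) :
    (G.induce (comp G Aᶜ w)ᶜ).Connected := by
  set D := comp G Aᶜ w with hD
  have hAD : A ⊆ Dᶜ := fun a haA haD => (comp_subset hw haD) haA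
  have key : ∀ x, ∀ hx : x ∈ Dᶜ, ∃ a, ∃ (haA : a ∈ A) (haD : a ∈ Dᶜ),
      (G.induce Dᶜ).Reachable ⟨x, hx⟩ ⟨a, haD⟩ := by
    intro x hx
    by_cases hxA : x ∈ A
    · exact ⟨x, hxA, hx, SimpleGraph.Reachable.refl _⟩
    · have hxAc : x ∈ Aᶜ := hxA
      set E := comp G Aᶜ x with hE
      have hED : ∀ y, y ∈ E → y ∈ Dᶜ := by
        intro y hyE hyD
        exact hx (SimpleGraph.Reachable.trans hyD
          (SimpleGraph.Reachable.symm hyE))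
      obtain ⟨a0, ha0⟩ := hA
      obtain ⟨p⟩ := hG.preconnected x a0
      obtain ⟨d, hdp, hd1, hd2⟩ := p.exists_boundary_dart E (mem_comp_self _ _)
        (fun h => (comp_subset hxAc h) ha0)
      have hsndA : d.snd ∈ A := by
        by_contra hsnd
        exact hd2 (comp_closed hd1 ⟨comp_subset hxAc hd1, hsnd, d.adj⟩)
      obtain ⟨q⟩ := (hd1 : (restrict G Aᶜ).Reachable x d.fst)
      obtain ⟨hfst, r⟩ := walk_reach_induce (S := Aᶜ) (C := E)
        (fun _ _ h hab => comp_closed h hab) q (mem_comp_self _ _)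
      have r' : (G.induce Dᶜ).Reachable ⟨x, hx⟩ ⟨d.fst, hED _ hfst⟩ :=
        reach_induce_mono (fun y hy => hED y hy) r
      have hsndD : d.snd ∈ Dᶜ := hAD hsndA
      have hadj : (G.induce Dᶜ).Adj ⟨d.fst, hED _ hfst⟩ ⟨d.snd, hsndD⟩ := d.adj
      exact ⟨d.snd, hsndA, hsndD, r'.trans hadj.reachable⟩
  rw [SimpleGraph.connected_iff]
  obtain ⟨a0, ha0⟩ := hA
  refine ⟨?_, ⟨⟨a0, hAD ha0⟩⟩⟩
  rintro ⟨x, hx⟩ ⟨y, hy⟩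
  obtain ⟨a, haA, haD, ra⟩ := key x hx
  obtain ⟨b, hbA, hbD, rb⟩ := key y hy
  have rab : (G.induce Dᶜ).Reachable ⟨a, haD⟩ ⟨b, hbD⟩ :=
    reach_induce_mono hAD (hAconn.preconnected ⟨a, haA⟩ ⟨b, hbA⟩)
  exact ra.trans (rab.trans rb.symm)

lemma main_lemma (hG : G.Connected) (X : Set V) (hX : X.Nonempty) (hXc : Xᶜ.Nonempty)
    (hle : X.ncard ≤ Xᶜ.ncard) :
    ∃ Xs : Set V, Xs.Nonempty ∧ Xsᶜ.Nonempty ∧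
      cutCard G Xs Xsᶜ * X.ncard ≤ cutCard G X Xᶜ * min Xs.ncard Xsᶜ.ncard ∧
      (G.induce Xs).Connected ∧ (G.induce Xsᶜ).Connected := by
  obtain ⟨v, hv, h1⟩ := exists_good_comp G X hX
  set A := comp G X v with hA
  have hAsub : A ⊆ X := comp_subset hv
  have hAne : A.Nonempty := ⟨v, mem_comp_self X v⟩
  have hAconn : (G.induce A).Connected := comp_induce_connected hv
  have hXcAc : Xᶜ ⊆ Aᶜ := Set.compl_subset_compl.mpr hAsub
  have hAcne : Aᶜ.Nonempty := hXc.mono hXcAc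
  obtain ⟨w, hw, h2⟩ := exists_good_comp G Aᶜ hAcne
  set D := comp G Aᶜ w with hD
  have hDsub : D ⊆ Aᶜ := comp_subset hw
  have hDne : D.Nonempty := ⟨w, mem_comp_self _ _⟩
  have hADc : A ⊆ Dᶜ := fun a ha hd => (hDsub hd) ha
  have hDcne : Dᶜ.Nonempty := hAne.mono hADc
  rw [compl_compl] at h2
  refine ⟨D, hDne, hDcne, ?_, comp_induce_connected hw,
    compl_comp_connected hG hAne hAconn hw⟩
  -- names
  have hAAc : cutCard G A Aᶜ = cutCard G A Xᶜ := cutCard_comp_compl hv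
  have hDDc : cutCard G D Dᶜ = cutCard G D A := by
    have h := cutCard_comp_compl (G := G) hw
    rwa [compl_compl] at h
  have hAcA : cutCard G Aᶜ A = cutCard G A Xᶜ := by
    rw [cutCard_comm, hAAc]
  rw [hAcA] at h2
  -- h2 : cutCard G D A * Aᶜ.ncard ≤ cutCard G A Xᶜ * D.ncard
  have f1 : cutCard G A Xᶜ ≤ cutCard G X Xᶜ := cutCard_mono hAsub subset_rfl
  have f3 : cutCard G D A ≤ cutCard G A Xᶜ := by
    rw [← hAcA]
    exact cutCard_mono hDsub subset_rfl
  have f4 : X.ncard ≤ Aᶜ.ncard :=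
    hle.trans (Set.ncard_le_ncard hXcAc (Set.toFinite _))
  have f5 : A.ncard ≤ Dᶜ.ncard := Set.ncard_le_ncard hADc (Set.toFinite _)
  rw [hDDc]
  rcases min_cases D.ncard Dᶜ.ncard with ⟨hmin, -⟩ | ⟨hmin, -⟩ <;> rw [hmin]
  · calc cutCard G D A * X.ncard ≤ cutCard G D A * Aᶜ.ncard :=
          Nat.mul_le_mul_left _ f4
      _ ≤ cutCard G A Xᶜ * D.ncard := h2
      _ ≤ cutCard G X Xᶜ * D.ncard := Nat.mul_le_mul_right _ f1
  · calc cutCard G D A * X.ncard ≤ cutCard G A Xᶜ * X.ncard :=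
          Nat.mul_le_mul_right _ f3
      _ ≤ cutCard G X Xᶜ * A.ncard := h1
      _ ≤ cutCard G X Xᶜ * Dᶜ.ncard := Nat.mul_le_mul_left _ f5
  -- note: h1 : cutCard G A Xᶜ * X.ncard ≤ cutCard G X Xᶜ * A.ncard


open SimpleGraph Set
variable {V : Type*} [Fintype V] {G : SimpleGraph V}

lemma main_real (hG : G.Connected) (X : Set V) (hX : X.Nonempty) (hXc : Xᶜ.Nonempty)
    (hle : X.ncard ≤ Xᶜ.ncard) :
    ∃ Xs : Set V, Xs.Nonempty ∧ Xsᶜ.Nonempty ∧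
      (cutCard G Xs Xsᶜ : ℝ) / (min (Nat.card ↥Xs) (Nat.card ↥(Xsᶜ)) : ℝ) ≤
        (cutCard G X Xᶜ : ℝ) / (min (Nat.card ↥X) (Nat.card ↥(Xᶜ)) : ℝ) ∧
      (G.induce Xs).Connected ∧ (G.induce Xsᶜ).Connected := by
  obtain ⟨D, h1, h2, hnat, hc1, hc2⟩ := main_lemma hG X hX hXc hle
  refine ⟨D, h1, h2, ?_, hc1, hc2⟩
  have hXpos : 0 < X.ncard := (Set.ncard_pos (Set.toFinite _)).mpr hX
  have hXcpos : 0 < Xᶜ.ncard := (Set.ncard_pos (Set.toFinite _)).mpr hXc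
  have hDpos : 0 < D.ncard := (Set.ncard_pos (Set.toFinite _)).mpr h1
  have hDcpos : 0 < Dᶜ.ncard := (Set.ncard_pos (Set.toFinite _)).mpr h2
  simp only [Nat.card_coe_set_eq]
  have hm1 : (0 : ℝ) < min (D.ncard : ℝ) (Dᶜ.ncard : ℝ) :=
    lt_min (by exact_mod_cast hDpos) (by exact_mod_cast hDcpos)
  have hm2 : (0 : ℝ) < min (X.ncard : ℝ) (Xᶜ.ncard : ℝ) :=
    lt_min (by exact_mod_cast hXpos) (by exact_mod_cast hXcpos)
  rw [div_le_div_iff₀ hm1 hm2]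
  rw [← Nat.cast_min, ← Nat.cast_min]
  have : cutCard G D Dᶜ * min X.ncard Xᶜ.ncard
      ≤ cutCard G X Xᶜ * min D.ncard Dᶜ.ncard := by
    rwa [min_eq_left hle]
  exact_mod_cast this

end ConnCut

/-- Every cut can be made connected without increasing sparsity: for a connected graph
`G` and a cut `(X, Xᶜ)` there is a cut `(X*, X*ᶜ)` of sparsity at most that of
`(X, Xᶜ)` in which both sides induce connected subgraphs. -/
theorem connected_sparsest_cut (V : Type) [Fintype V] (G : SimpleGraph V)
    (hG : G.Connected) (X : Set V) (hX : X.Nonempty) (hXc : Xᶜ.Nonempty) :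
    ∃ Xs : Set V, Xs.Nonempty ∧ Xsᶜ.Nonempty ∧
      (cutCard G Xs Xsᶜ : ℝ) / (min (Nat.card ↥Xs) (Nat.card ↥(Xsᶜ)) : ℝ) ≤
        (cutCard G X Xᶜ : ℝ) / (min (Nat.card ↥X) (Nat.card ↥(Xᶜ)) : ℝ) ∧
      (G.induce Xs).Connected ∧ (G.induce Xsᶜ).Connected := by
  rcases le_total X.ncard Xᶜ.ncard with hle | hle
  · exact ConnCut.main_real hG X hX hXc hle
  · obtain ⟨Xs, h1, h2, hr, hc1, hc2⟩ := ConnCut.main_real hG Xᶜ hXc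
      (by rwa [compl_compl]) (by rwa [compl_compl])
    refine ⟨Xs, h1, h2, ?_, hc1, hc2⟩
    rw [show cutCard G Xᶜ Xᶜᶜ = cutCard G X Xᶜ from by
        rw [compl_compl, ConnCut.cutCard_comm]] at hr
    rw [show (min (Nat.card ↥(Xᶜ)) (Nat.card ↥(Xᶜᶜ)) : ℝ)
        = (min (Nat.card ↥X) (Nat.card ↥(Xᶜ)) : ℝ) from by
        rw [compl_compl, min_comm]] at hr
    exact hr
end
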